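/- arXiv:1912.12787 — 14 statements merged into one kernel-verified Lean document; each statement's English description precedes it below -/
import Mathlib

section
/- Let X be a nonempty set and let (R_H, R_S) be a bi-relation on X that is non-trivial, semi-transitive, and connected (p-continuous with each parameter space connected). Then the soft part R_S is complete (R_S ∪ R_S⁻¹ = X × X) and transitive (R_S ∘ R_S ⊆ R_S). -/
open Set

/-- The transpose `R⁻¹ = {(x,y) : (y,x) ∈ R}` of a relation. -/
def transp {α : Type} (R : Set (α × α)) : Set (α × α) := {p | (p.2, p.1) ∈ R}

/-- The upper section `R(x) = {y : (x,y) ∈ R}`. -/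
def upSec {α : Type} (R : Set (α × α)) (x : α) : Set α := {y | (x, y) ∈ R}

/-- The lower section `R⁻¹(x) = {y : (y,x) ∈ R}`. -/
def lowSec {α : Type} (R : Set (α × α)) (x : α) : Set α := {y | (y, x) ∈ R}

/-- The symmetric part `I = R ∩ R⁻¹`. -/
def symmPart {α : Type} (R : Set (α × α)) : Set (α × α) := R ∩ transp R

/-- The asymmetric part `P = R \ R⁻¹`. -/
def asymmPart {α : Type} (R : Set (α × α)) : Set (α × α) := R \ transp R

/-- Composition: `(y,x) ∈ relComp R R'` iff there is `z` with `(y,z) ∈ R'` and `(z,x) ∈ R`. -/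
def relComp {α : Type} (R R' : Set (α × α)) : Set (α × α) :=
  {p | ∃ z, (p.1, z) ∈ R' ∧ (z, p.2) ∈ R}

/-- `R` is transitive if `R ∘ R ⊆ R`. -/
def IsTransRel {α : Type} (R : Set (α × α)) : Prop := relComp R R ⊆ R

/-- `R` is complete if `R ∪ R⁻¹ = X × X`. -/
def IsCompleteRel {α : Type} (R : Set (α × α)) : Prop := R ∪ transp R = Set.univ

/-- `R` is non-trivial if its asymmetric part is nonempty. -/
def IsNontrivialRel {α : Type} (R : Set (α × α)) : Prop := asymmPart R ≠ ∅

/-- `R` is semi-transitive if `I ∘ P ⊆ P` and `P ∘ I ⊆ P`. -/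
def IsSemiTransRel {α : Type} (R : Set (α × α)) : Prop :=
  relComp (symmPart R) (asymmPart R) ⊆ asymmPart R ∧
  relComp (asymmPart R) (symmPart R) ⊆ asymmPart R

/-- `(R_H, R_S)` is a bi-relation if `R_H ⊆ R_S` and `P_S ⊆ P_H`. -/
def IsBiRelation {α : Type} (RH RS : Set (α × α)) : Prop :=
  RH ⊆ RS ∧ asymmPart RS ⊆ asymmPart RH

/-- Semi-transitivity of a bi-relation: (i) `R_H` semi-transitive, (ii) `I_S ∘ R_H ⊆ R_S`,
`R_H ∘ I_S ⊆ R_S`, (iii) `P_H ∩ (P_S ∘ I_S) ⊆ P_S`, `P_H ∩ (I_S ∘ P_S) ⊆ P_S`. -/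
def IsSemiTransBiRel {α : Type} (RH RS : Set (α × α)) : Prop :=
  IsSemiTransRel RH ∧
  relComp (symmPart RS) RH ⊆ RS ∧
  relComp RH (symmPart RS) ⊆ RS ∧
  asymmPart RH ∩ relComp (asymmPart RS) (symmPart RS) ⊆ asymmPart RS ∧
  asymmPart RH ∩ relComp (symmPart RS) (asymmPart RS) ⊆ asymmPart RS

/-- `(R_H, R_S)` is p-continuous: for all `x y` there are a topological space `Λ` and
`f : Λ → α` with `x, y` in the image of `f`, such that preimages of sections of `R_H` are
closed and preimages of sections of `P_S` are open. -/
def PContinuousBiRel {α : Type} (RH RS : Set (α × α)) : Prop :=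
  ∀ x y : α, ∃ (Λ : Type) (_ : TopologicalSpace Λ) (f : Λ → α),
    x ∈ Set.range f ∧ y ∈ Set.range f ∧
    ∀ z : α,
      IsClosed (f ⁻¹' upSec RH z) ∧ IsClosed (f ⁻¹' lowSec RH z) ∧
      IsOpen (f ⁻¹' upSec (asymmPart RS) z) ∧ IsOpen (f ⁻¹' lowSec (asymmPart RS) z)

/-- `(R_H, R_S)` is a connected bi-relation: p-continuity with each `Λ` connected. -/
def ConnectedBiRel {α : Type} (RH RS : Set (α × α)) : Prop :=
  ∀ x y : α, ∃ (Λ : Type) (_ : TopologicalSpace Λ), ConnectedSpace Λ ∧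
    ∃ f : Λ → α,
      x ∈ Set.range f ∧ y ∈ Set.range f ∧
      ∀ z : α,
        IsClosed (f ⁻¹' upSec RH z) ∧ IsClosed (f ⁻¹' lowSec RH z) ∧
        IsOpen (f ⁻¹' upSec (asymmPart RS) z) ∧ IsOpen (f ⁻¹' lowSec (asymmPart RS) z)


section AuxProofs

variable {X : Type}

private lemma soft_of_not_asymm {RS : Set (X × X)} {x y : X}
    (h1 : (x, y) ∈ RS) (h2 : (x, y) ∉ asymmPart RS) : (y, x) ∈ RS := by
  by_contra h
  exact h2 ⟨h1, h⟩

private lemma dichotomy {RH RS : Set (X × X)} (hbi : IsBiRelation RH RS)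
    (hst : IsSemiTransBiRel RH RS) (hconn : ConnectedBiRel RH RS)
    {p q : X} (hpq : (p, q) ∈ asymmPart RS) (z : X) :
    (p, z) ∈ asymmPart RS ∨ (z, q) ∈ asymmPart RS := by
  obtain ⟨Λ, tΛ, hcs, f, hz, hq, hsec⟩ := hconn z q
  haveI := hcs
  set U : Set Λ := f ⁻¹' (upSec (asymmPart RS) p) with hUdef
  set V : Set Λ := f ⁻¹' (lowSec (asymmPart RS) q) with hVdef
  have hsubU : U ⊆ f ⁻¹' (upSec RH p) := fun μ hμ => (hbi.2 hμ).1
  have hsubV : V ⊆ f ⁻¹' (lowSec RH q) := fun μ hμ => (hbi.2 hμ).1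
  have hclosed : IsClosed (U ∪ V) := by
    apply isClosed_of_closure_subset
    intro μ hμc
    have hm : μ ∈ f ⁻¹' (upSec RH p) ∪ f ⁻¹' (lowSec RH q) :=
      closure_minimal (Set.union_subset_union hsubU hsubV)
        ((hsec p).1.union (hsec q).2.1) hμc
    by_contra hnW
    have hnp : (p, f μ) ∉ asymmPart RS := fun h => hnW (Or.inl h)
    have hnq : (f μ, q) ∉ asymmPart RS := fun h => hnW (Or.inr h)
    rcases hm with hm | hm
    · -- (p, f μ) ∈ RH
      have hpR : (p, f μ) ∈ RS := hbi.1 hm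
      have hfp : (f μ, p) ∈ RS := soft_of_not_asymm hpR hnp
      by_cases hH : (f μ, p) ∈ RH
      · have hPH : (f μ, q) ∈ asymmPart RH := hst.1.2 ⟨p, ⟨hH, hm⟩, hbi.2 hpq⟩
        exact hnq (hst.2.2.2.1 ⟨hPH, ⟨p, ⟨hfp, hpR⟩, hpq⟩⟩)
      · have hfq : (f μ, q) ∈ RS := hst.2.2.1 ⟨p, ⟨hfp, hpR⟩, (hbi.2 hpq).1⟩
        have hqf : (q, f μ) ∈ RS := soft_of_not_asymm hfq hnq
        exact hnp (hst.2.2.2.2 ⟨⟨hm, hH⟩, ⟨q, hpq, ⟨hqf, hfq⟩⟩⟩)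
    · -- (f μ, q) ∈ RH
      have hfR : (f μ, q) ∈ RS := hbi.1 hm
      have hqf : (q, f μ) ∈ RS := soft_of_not_asymm hfR hnq
      by_cases hH : (q, f μ) ∈ RH
      · have hPH : (p, f μ) ∈ asymmPart RH := hst.1.1 ⟨q, hbi.2 hpq, ⟨hH, hm⟩⟩
        exact hnp (hst.2.2.2.2 ⟨hPH, ⟨q, hpq, ⟨hqf, hfR⟩⟩⟩)
      · have hpf : (p, f μ) ∈ RS := hst.2.1 ⟨q, (hbi.2 hpq).1, ⟨hqf, hfR⟩⟩
        have hfp : (f μ, p) ∈ RS := soft_of_not_asymm hpf hnp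
        exact hnq (hst.2.2.2.1 ⟨⟨hm, hH⟩, ⟨p, ⟨hfp, hpf⟩, hpq⟩⟩)
  have hopen : IsOpen (U ∪ V) := ((hsec p).2.2.1).union ((hsec q).2.2.2)
  obtain ⟨lq, hlq⟩ := hq
  have hne : (U ∪ V).Nonempty :=
    ⟨lq, Or.inl (show (p, f lq) ∈ asymmPart RS by rw [hlq]; exact hpq)⟩
  have huniv : U ∪ V = Set.univ := IsClopen.eq_univ ⟨hclosed, hopen⟩ hne
  obtain ⟨lz, hlz⟩ := hz
  have hmem : lz ∈ U ∪ V := by rw [huniv]; exact Set.mem_univ _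
  rcases hmem with h | h
  · left
    have : (p, f lz) ∈ asymmPart RS := h
    rwa [hlz] at this
  · right
    have : (f lz, q) ∈ asymmPart RS := h
    rwa [hlz] at this

private lemma complete_aux {RH RS : Set (X × X)} (hbi : IsBiRelation RH RS)
    (hnt : IsNontrivialRel RS) (hst : IsSemiTransBiRel RH RS)
    (hconn : ConnectedBiRel RH RS) :
    ∀ x y : X, (x, y) ∈ RS ∨ (y, x) ∈ RS := by
  intro x y
  by_contra hcon
  push_neg at hcon
  obtain ⟨hxy, hyx⟩ := hcon
  obtain ⟨⟨a, b⟩, hab⟩ := Set.nonempty_iff_ne_empty.mpr hnt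
  rcases dichotomy hbi hst hconn hab x with hax | hxb
  · -- Case A : a ≻ x
    obtain ⟨Λ, tΛ, hcs, f, hxr, har, hsec⟩ := hconn x a
    haveI := hcs
    set U : Set Λ := f ⁻¹' (lowSec (asymmPart RS) x) with hUdef
    have hsub : U ⊆ f ⁻¹' (lowSec RH x) ∩ f ⁻¹' (lowSec RH y) := by
      intro μ hμ
      refine ⟨(hbi.2 hμ).1, ?_⟩
      rcases dichotomy hbi hst hconn hμ y with h | h
      · exact (hbi.2 h).1
      · exact absurd h.1 hyx
    have hUclosed : IsClosed U := by
      apply isClosed_of_closure_subset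
      intro μ hμc
      have hm := closure_minimal hsub (((hsec x).2.1).inter ((hsec y).2.1)) hμc
      by_contra hnU
      have h1 : (f μ, x) ∈ RS := hbi.1 hm.1
      have h2 : (x, f μ) ∈ RS := soft_of_not_asymm h1 hnU
      exact hxy (hst.2.2.1 ⟨f μ, ⟨h2, h1⟩, hm.2⟩)
    have hUopen : IsOpen U := (hsec x).2.2.2
    obtain ⟨la, hla⟩ := har
    have hne : U.Nonempty :=
      ⟨la, show (f la, x) ∈ asymmPart RS by rw [hla]; exact hax⟩
    have huniv : U = Set.univ := IsClopen.eq_univ ⟨hUclosed, hUopen⟩ hne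
    obtain ⟨lx, hlx⟩ := hxr
    have hxx : (f lx, x) ∈ asymmPart RS := by
      have : lx ∈ U := by rw [huniv]; exact Set.mem_univ _
      exact this
    rw [hlx] at hxx
    exact hxx.2 hxx.1
  · -- Case B : x ≻ b
    obtain ⟨Λ, tΛ, hcs, f, hxr, hbr, hsec⟩ := hconn x b
    haveI := hcs
    set V : Set Λ := f ⁻¹' (upSec (asymmPart RS) x) with hVdef
    have hsub : V ⊆ f ⁻¹' (upSec RH x) ∩ f ⁻¹' (upSec RH y) := by
      intro μ hμ
      refine ⟨(hbi.2 hμ).1, ?_⟩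
      rcases dichotomy hbi hst hconn hμ y with h | h
      · exact absurd h.1 hxy
      · exact (hbi.2 h).1
    have hVclosed : IsClosed V := by
      apply isClosed_of_closure_subset
      intro μ hμc
      have hm := closure_minimal hsub (((hsec x).1).inter ((hsec y).1)) hμc
      by_contra hnV
      have h1 : (x, f μ) ∈ RS := hbi.1 hm.1
      have h2 : (f μ, x) ∈ RS := soft_of_not_asymm h1 hnV
      exact hyx (hst.2.1 ⟨f μ, hm.2, ⟨h2, h1⟩⟩)
    have hVopen : IsOpen V := (hsec x).2.2.1
    obtain ⟨lb, hlb⟩ := hbr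
    have hne : V.Nonempty :=
      ⟨lb, show (x, f lb) ∈ asymmPart RS by rw [hlb]; exact hxb⟩
    have huniv : V = Set.univ := IsClopen.eq_univ ⟨hVclosed, hVopen⟩ hne
    obtain ⟨lx, hlx⟩ := hxr
    have hxx : (x, f lx) ∈ asymmPart RS := by
      have : lx ∈ V := by rw [huniv]; exact Set.mem_univ _
      exact this
    rw [hlx] at hxx
    exact hxx.2 hxx.1

end AuxProofs

/-- the soft part of a non-trivial, semi-transitive and connected bi-relation
on a nonempty set is complete and transitive. -/
theorem soft_part_complete_and_transitive {X : Type} [Nonempty X]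
    (RH RS : Set (X × X)) (hbi : IsBiRelation RH RS)
    (hnt : IsNontrivialRel RS) (hst : IsSemiTransBiRel RH RS)
    (hconn : ConnectedBiRel RH RS) :
    IsCompleteRel RS ∧ IsTransRel RS := by
  have hcomp : ∀ x y : X, (x, y) ∈ RS ∨ (y, x) ∈ RS := complete_aux hbi hnt hst hconn
  constructor
  · apply Set.eq_univ_of_forall
    rintro ⟨x, y⟩
    rcases hcomp x y with h | h
    · exact Or.inl h
    · exact Or.inr h
  · rintro ⟨x, z⟩ ⟨y, hxy, hyz⟩
    by_cases hP : (x, y) ∈ asymmPart RS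
    · rcases dichotomy hbi hst hconn hP z with h | h
      · exact h.1
      · exact absurd hyz h.2
    · by_cases hP2 : (y, z) ∈ asymmPart RS
      · rcases dichotomy hbi hst hconn hP2 x with h | h
        · exact absurd hxy h.2
        · exact h.1
      · rcases hcomp x z with h | h
        · exact h
        · by_cases hP3 : (z, x) ∈ asymmPart RS
          · rcases dichotomy hbi hst hconn hP3 y with h' | h'
            · exact absurd hyz h'.2
            · exact absurd hxy h'.2
          · exact soft_of_not_asymm h hP3
end

section
/- Let X be a nonempty set and let R be a relation on X that is non-trivial, semi-transitive, whose symmetric part I is transitive, and which is connected (i.e., the bi-relation (R,R) is p-continuous with each parameter space connected). Then R is complete and transitive. -/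
open Set

section AuxForMainTheorem

variable {X : Type} {R : Set (X × X)}

private lemma II_mem (hIt : IsTransRel (symmPart R)) {a b c : X}
    (h1 : (a, b) ∈ R) (h2 : (b, a) ∈ R) (h3 : (b, c) ∈ R) (h4 : (c, b) ∈ R) :
    (a, c) ∈ R :=
  (hIt ⟨b, show (a, b) ∈ symmPart R from ⟨h1, h2⟩,
    show (b, c) ∈ symmPart R from ⟨h3, h4⟩⟩).1

private lemma IP_mem (hst : IsSemiTransRel R) {a b c : X}
    (h1 : (a, b) ∈ R) (h2 : (b, a) ∈ R) (h3 : (b, c) ∈ asymmPart R) :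
    (a, c) ∈ asymmPart R :=
  hst.2 ⟨b, show (a, b) ∈ symmPart R from ⟨h1, h2⟩, h3⟩

private lemma PI_mem (hst : IsSemiTransRel R) {a b c : X}
    (h1 : (a, b) ∈ asymmPart R) (h2 : (b, c) ∈ R) (h3 : (c, b) ∈ R) :
    (a, c) ∈ asymmPart R :=
  hst.1 ⟨b, h1, show (b, c) ∈ symmPart R from ⟨h2, h3⟩⟩

private lemma secs_eq_aux (hst : IsSemiTransRel R) {u v : X} (huv : (u, v) ∈ asymmPart R) :
    upSec R u ∪ lowSec R v = upSec (asymmPart R) u ∪ lowSec (asymmPart R) v := by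
  ext w
  simp only [upSec, lowSec, Set.mem_union, Set.mem_setOf_eq]
  constructor
  · rintro (h | h)
    · by_cases hw : (w, u) ∈ R
      · exact Or.inr (hst.2 ⟨u, ⟨hw, h⟩, huv⟩)
      · exact Or.inl ⟨h, hw⟩
    · by_cases hw : (v, w) ∈ R
      · exact Or.inl (hst.1 ⟨v, huv, hw, h⟩)
      · exact Or.inr ⟨h, hw⟩
  · rintro (h | h)
    · exact Or.inl h.1
    · exact Or.inr h.1

private lemma K_clopen_aux (hst : IsSemiTransRel R) {u v : X} (huv : (u, v) ∈ asymmPart R)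
    {Λ : Type} [TopologicalSpace Λ] {f : Λ → X}
    (hf : ∀ z : X, IsClosed (f ⁻¹' upSec R z) ∧ IsClosed (f ⁻¹' lowSec R z) ∧
      IsOpen (f ⁻¹' upSec (asymmPart R) z) ∧ IsOpen (f ⁻¹' lowSec (asymmPart R) z)) :
    IsClopen (f ⁻¹' upSec R u ∪ f ⁻¹' lowSec R v) := by
  constructor
  · exact (hf u).1.union (hf v).2.1
  · have h : f ⁻¹' upSec R u ∪ f ⁻¹' lowSec R v
        = f ⁻¹' upSec (asymmPart R) u ∪ f ⁻¹' lowSec (asymmPart R) v := by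
      rw [← Set.preimage_union, ← Set.preimage_union, secs_eq_aux hst huv]
    rw [h]
    exact (hf u).2.2.1.union (hf v).2.2.2

private lemma L3_aux (hst : IsSemiTransRel R) (hconn : ConnectedBiRel R R)
    {u v : X} (huv : (u, v) ∈ asymmPart R) (w : X) :
    (u, w) ∈ asymmPart R ∨ (w, v) ∈ asymmPart R := by
  obtain ⟨Λ, _, hΛ, f, ⟨lu, hlu⟩, ⟨lw, hlw⟩, hf⟩ := hconn u w
  haveI := hΛ
  have hK := K_clopen_aux hst huv hf
  have huniv : f ⁻¹' upSec R u ∪ f ⁻¹' lowSec R v = Set.univ := by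
    refine hK.eq_univ ⟨lu, Or.inr ?_⟩
    show (f lu, v) ∈ R
    rw [hlu]; exact huv.1
  have hw : lw ∈ f ⁻¹' upSec R u ∪ f ⁻¹' lowSec R v := by
    rw [huniv]; trivial
  rcases hw with h | h
  · replace h : (u, w) ∈ R := by rw [← hlw]; exact h
    by_cases hc : (w, u) ∈ R
    · exact Or.inr (hst.2 ⟨u, ⟨hc, h⟩, huv⟩)
    · exact Or.inl ⟨h, hc⟩
  · replace h : (w, v) ∈ R := by rw [← hlw]; exact h
    by_cases hc : (v, w) ∈ R
    · exact Or.inl (hst.1 ⟨v, huv, hc, h⟩)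
    · exact Or.inr ⟨h, hc⟩

private lemma refl_aux (hnt : IsNontrivialRel R) (hst : IsSemiTransRel R)
    (hIt : IsTransRel (symmPart R)) (hconn : ConnectedBiRel R R) (x : X) :
    (x, x) ∈ R := by
  by_contra hxx
  obtain ⟨⟨a, b⟩, hab⟩ := Set.nonempty_iff_ne_empty.mpr hnt
  have hnoI : ∀ w : X, ¬((w, x) ∈ R ∧ (x, w) ∈ R) := by
    rintro w ⟨h1, h2⟩
    exact hxx (II_mem hIt h2 h1 h1 h2)
  rcases L3_aux hst hconn hab x with hax | hxb
  · obtain ⟨Λ, _, hΛ, f, ⟨la, hla⟩, ⟨lx, hlx⟩, hf⟩ := hconn a x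
    haveI := hΛ
    have heq : lowSec R x = lowSec (asymmPart R) x := by
      ext w
      simp only [lowSec, Set.mem_setOf_eq]
      exact ⟨fun h => ⟨h, fun h2 => hnoI w ⟨h, h2⟩⟩, fun h => h.1⟩
    have hcl : IsClopen (f ⁻¹' lowSec R x) :=
      ⟨(hf x).2.1, by rw [heq]; exact (hf x).2.2.2⟩
    have huniv : f ⁻¹' lowSec R x = Set.univ := by
      refine hcl.eq_univ ⟨la, ?_⟩
      show (f la, x) ∈ R
      rw [hla]; exact hax.1
    have hmem : lx ∈ f ⁻¹' lowSec R x := by rw [huniv]; trivial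
    rw [Set.mem_preimage, hlx] at hmem
    exact hxx hmem
  · obtain ⟨Λ, _, hΛ, f, ⟨lx, hlx⟩, ⟨lb, hlb⟩, hf⟩ := hconn x b
    haveI := hΛ
    have heq : upSec R x = upSec (asymmPart R) x := by
      ext w
      simp only [upSec, Set.mem_setOf_eq]
      exact ⟨fun h => ⟨h, fun h2 => hnoI w ⟨h2, h⟩⟩, fun h => h.1⟩
    have hcl : IsClopen (f ⁻¹' upSec R x) :=
      ⟨(hf x).1, by rw [heq]; exact (hf x).2.2.1⟩
    have huniv : f ⁻¹' upSec R x = Set.univ := by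
      refine hcl.eq_univ ⟨lb, ?_⟩
      show (x, f lb) ∈ R
      rw [hlb]; exact hxb.1
    have hmem : lx ∈ f ⁻¹' upSec R x := by rw [huniv]; trivial
    rw [Set.mem_preimage, hlx] at hmem
    exact hxx hmem

private lemma comp_aux (hnt : IsNontrivialRel R) (hst : IsSemiTransRel R)
    (hIt : IsTransRel (symmPart R)) (hconn : ConnectedBiRel R R) (x y : X) :
    (x, y) ∈ R ∨ (y, x) ∈ R := by
  by_contra hc
  push_neg at hc
  obtain ⟨hxy, hyx⟩ := hc
  have hrefl : ∀ w : X, (w, w) ∈ R := refl_aux hnt hst hIt hconn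
  -- equal strict cones of incomparable points
  have key : ∀ p q : X, ¬(p, q) ∈ R → ¬(q, p) ∈ R →
      (∀ w, (w, p) ∈ asymmPart R → (w, q) ∈ asymmPart R) ∧
      (∀ w, (p, w) ∈ asymmPart R → (q, w) ∈ asymmPart R) := by
    intro p q hpq hqp
    obtain ⟨Λ, _, hΛ, f, ⟨lp, hlp⟩, ⟨lq, hlq⟩, hf⟩ := hconn p q
    haveI := hΛ
    constructor
    · intro w hw
      have hK := K_clopen_aux hst hw hf
      have huniv : f ⁻¹' upSec R w ∪ f ⁻¹' lowSec R p = Set.univ := by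
        refine hK.eq_univ ⟨lp, Or.inr ?_⟩
        show (f lp, p) ∈ R
        rw [hlp]; exact hrefl p
      have hq : lq ∈ f ⁻¹' upSec R w ∪ f ⁻¹' lowSec R p := by rw [huniv]; trivial
      rcases hq with h | h
      · replace h : (w, q) ∈ R := by rw [← hlq]; exact h
        by_cases h2 : (q, w) ∈ R
        · exact absurd (IP_mem hst h2 h hw).1 hqp
        · exact ⟨h, h2⟩
      · replace h : (q, p) ∈ R := by rw [← hlq]; exact h
        exact absurd h hqp
    · intro w hw
      have hK := K_clopen_aux hst hw hf
      have huniv : f ⁻¹' upSec R p ∪ f ⁻¹' lowSec R w = Set.univ := by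
        refine hK.eq_univ ⟨lp, Or.inl ?_⟩
        show (p, f lp) ∈ R
        rw [hlp]; exact hrefl p
      have hq : lq ∈ f ⁻¹' upSec R p ∪ f ⁻¹' lowSec R w := by rw [huniv]; trivial
      rcases hq with h | h
      · replace h : (p, q) ∈ R := by rw [← hlq]; exact h
        exact absurd h hpq
      · replace h : (q, w) ∈ R := by rw [← hlq]; exact h
        by_cases h2 : (w, q) ∈ R
        · exact absurd (PI_mem hst hw h2 h).1 hpq
        · exact ⟨h, h2⟩
  obtain ⟨up_xy, dn_xy⟩ := key x y hxy hyx
  obtain ⟨up_yx, dn_yx⟩ := key y x hyx hxy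
  have II : ∀ u v w : X, (u, v) ∈ R → (v, u) ∈ R → (v, w) ∈ R → (w, v) ∈ R → (u, w) ∈ R :=
    fun u v w h1 h2 h3 h4 => II_mem hIt h1 h2 h3 h4
  -- the "incomparability hull" of x equals N(x) ∪ N(y)
  have hDeq : (upSec (asymmPart R) x ∪ lowSec (asymmPart R) x)ᶜ
      = (upSec R x ∪ lowSec R x)ᶜ ∪ (upSec R y ∪ lowSec R y)ᶜ := by
    ext w
    simp only [Set.mem_compl_iff, Set.mem_union, upSec, lowSec, Set.mem_setOf_eq, not_or]
    constructor
    · rintro ⟨h1, h2⟩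
      by_cases hxw : (x, w) ∈ R
      · have hwx : (w, x) ∈ R := by
          by_contra hwx
          exact h1 ⟨hxw, hwx⟩
        refine Or.inr ⟨?_, ?_⟩
        · intro hyw
          by_cases hwy : (w, y) ∈ R
          · exact hyx (II y w x hyw hwy hwx hxw)
          · exact h1 (dn_yx w ⟨hyw, hwy⟩)
        · intro hwy
          by_cases hyw : (y, w) ∈ R
          · exact hyx (II y w x hyw hwy hwx hxw)
          · exact h2 (up_yx w ⟨hwy, hyw⟩)
      · by_cases hwx : (w, x) ∈ R
        · exact absurd ⟨hwx, hxw⟩ h2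
        · exact Or.inl ⟨hxw, hwx⟩
    · rintro (⟨h1, h2⟩ | ⟨h1, h2⟩)
      · exact ⟨fun hP => h1 hP.1, fun hP => h2 hP.1⟩
      · exact ⟨fun hP => h1 (dn_xy w hP).1, fun hP => h2 (up_xy w hP).1⟩
  -- the clopen set of points incomparable (in the strict sense) to x
  have main : ∀ (Λ : Type) (_ : TopologicalSpace Λ), ConnectedSpace Λ → ∀ f : Λ → X,
      (∀ z : X, IsClosed (f ⁻¹' upSec R z) ∧ IsClosed (f ⁻¹' lowSec R z) ∧
        IsOpen (f ⁻¹' upSec (asymmPart R) z) ∧ IsOpen (f ⁻¹' lowSec (asymmPart R) z)) →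
      ∀ l0 : Λ, f l0 = x →
      (f ⁻¹' upSec (asymmPart R) x ∪ f ⁻¹' lowSec (asymmPart R) x)ᶜ = Set.univ := by
    intro Λ _ hΛ f hf l0 hl0
    haveI := hΛ
    have hSeq : (f ⁻¹' upSec (asymmPart R) x ∪ f ⁻¹' lowSec (asymmPart R) x)ᶜ
        = (f ⁻¹' upSec R x ∪ f ⁻¹' lowSec R x)ᶜ ∪ (f ⁻¹' upSec R y ∪ f ⁻¹' lowSec R y)ᶜ := by
      rw [← Set.preimage_union, ← Set.preimage_compl, hDeq, Set.preimage_union,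
        Set.preimage_compl, Set.preimage_compl, Set.preimage_union, Set.preimage_union]
    have hcl : IsClopen (f ⁻¹' upSec (asymmPart R) x ∪ f ⁻¹' lowSec (asymmPart R) x)ᶜ := by
      constructor
      · exact ((hf x).2.2.1.union (hf x).2.2.2).isClosed_compl
      · rw [hSeq]
        exact (((hf x).1.union (hf x).2.1).isOpen_compl).union
          (((hf y).1.union (hf y).2.1).isOpen_compl)
    refine hcl.eq_univ ⟨l0, ?_⟩
    intro hmem
    rcases hmem with h | h
    · rw [Set.mem_preimage, hl0] at h
      exact h.2 h.1
    · rw [Set.mem_preimage, hl0] at h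
      exact h.2 h.1
  obtain ⟨⟨a, b⟩, hab⟩ := Set.nonempty_iff_ne_empty.mpr hnt
  rcases L3_aux hst hconn hab x with hax | hxb
  · obtain ⟨Λ, _, hΛ, f, ⟨la, hla⟩, ⟨lx, hlx⟩, hf⟩ := hconn a x
    have huniv := main Λ _ hΛ f hf lx hlx
    have hmem : la ∈ (f ⁻¹' upSec (asymmPart R) x ∪ f ⁻¹' lowSec (asymmPart R) x)ᶜ := by
      rw [huniv]; trivial
    exact hmem (Or.inr (by show (f la, x) ∈ asymmPart R; rw [hla]; exact hax))
  · obtain ⟨Λ, _, hΛ, f, ⟨lx, hlx⟩, ⟨lb, hlb⟩, hf⟩ := hconn x b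
    have huniv := main Λ _ hΛ f hf lx hlx
    have hmem : lb ∈ (f ⁻¹' upSec (asymmPart R) x ∪ f ⁻¹' lowSec (asymmPart R) x)ᶜ := by
      rw [huniv]; trivial
    exact hmem (Or.inl (by show (x, f lb) ∈ asymmPart R; rw [hlb]; exact hxb))

end AuxForMainTheorem


/-- a non-trivial, semi-transitive, connected relation whose symmetric part is
transitive, on a nonempty set, is complete and transitive. -/
theorem connected_relation_complete_and_transitive {X : Type} [Nonempty X]
    (R : Set (X × X)) (hnt : IsNontrivialRel R) (hst : IsSemiTransRel R)
    (hIt : IsTransRel (symmPart R)) (hconn : ConnectedBiRel R R) :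
    IsCompleteRel R ∧ IsTransRel R := by
  constructor
  · apply Set.eq_univ_of_forall
    intro p
    rcases comp_aux hnt hst hIt hconn p.1 p.2 with h | h
    · exact Or.inl h
    · exact Or.inr h
  · rintro ⟨p, q⟩ ⟨z, h1, h2⟩
    by_cases hzp : (z, p) ∈ R
    · by_cases hqz : (q, z) ∈ R
      · exact (hIt ⟨z, ⟨h1, hzp⟩, ⟨h2, hqz⟩⟩).1
      · exact (hst.2 ⟨z, ⟨h1, hzp⟩, ⟨h2, hqz⟩⟩).1
    · by_cases hqz : (q, z) ∈ R
      · exact (hst.1 ⟨z, ⟨h1, hzp⟩, ⟨h2, hqz⟩⟩).1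
      · rcases L3_aux hst hconn (⟨h2, hqz⟩ : (z, q) ∈ asymmPart R) p with h | h
        · exact absurd h.1 hzp
        · exact h.1
end

section
/- (Eilenberg, 1941) Let X be a connected topological space and let R be a relation on X that is anti-symmetric (I ⊆ {(x,x) : x ∈ X}), complete, and continuous. Then R is transitive. -/
open Set

/-- A relation on a topological space is continuous if its sections are closed and the
sections of its asymmetric part are open. -/
def ContinuousRel {α : Type} [TopologicalSpace α] (R : Set (α × α)) : Prop :=
  ∀ z : α,
    IsClosed (upSec R z) ∧ IsClosed (lowSec R z) ∧
    IsOpen (upSec (asymmPart R) z) ∧ IsOpen (lowSec (asymmPart R) z)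

/-- Eilenberg 1941: an anti-symmetric, complete, continuous relation on a
connected topological space is transitive. -/
theorem eilenberg_transitive {X : Type} [TopologicalSpace X] [ConnectedSpace X]
    (R : Set (X × X)) (hanti : symmPart R ⊆ {p : X × X | p.1 = p.2})
    (hcomp : IsCompleteRel R) (hcont : ContinuousRel R) :
    IsTransRel R := by
  rintro ⟨x, z⟩ ⟨w, hw1, hw2⟩
  by_contra hxz
  have hcomp' : ∀ a b : X, (a, b) ∈ R ∨ (b, a) ∈ R := by
    intro a b
    have h : (a, b) ∈ R ∪ transp R := by rw [hcomp]; exact mem_univ _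
    rcases h with h | h
    · exact Or.inl h
    · exact Or.inr h
  set A := upSec R x ∩ lowSec R z with hA
  set B := lowSec R x ∪ upSec R z with hB
  have hAclosed : IsClosed A := ((hcont x).1).inter ((hcont z).2.1)
  have hBclosed : IsClosed B := ((hcont x).2.1).union ((hcont z).1)
  have hwA : w ∈ A := ⟨hw1, hw2⟩
  have hzB : z ∈ B := by
    rcases hcomp' z x with h | h
    · exact Or.inl h
    · exact (hxz h).elim
  have hcover : A ∪ B = univ := by
    ext v
    simp only [mem_union, mem_univ, iff_true]
    by_cases h1 : (v, x) ∈ R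
    · exact Or.inr (Or.inl h1)
    by_cases h2 : (z, v) ∈ R
    · exact Or.inr (Or.inr h2)
    have hx : (x, v) ∈ R := (hcomp' v x).resolve_left h1
    have hz : (v, z) ∈ R := (hcomp' z v).resolve_left h2
    exact Or.inl ⟨hx, hz⟩
  have hdisj : A ∩ B = ∅ := by
    ext v
    simp only [mem_inter_iff, mem_empty_iff_false, iff_false]
    rintro ⟨⟨hxv, hvz⟩, hvB⟩
    rcases hvB with hvx | hzv
    · have : v = x := (hanti ⟨hvx, hxv⟩)
      exact hxz (this ▸ hvz)
    · have : (z : X) = v := (hanti ⟨hzv, hvz⟩)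
      exact hxz (this ▸ hxv)
  have hAopen : IsOpen A := by
    have : A = Bᶜ := by
      ext v
      constructor
      · intro hv hvB
        have : v ∈ A ∩ B := ⟨hv, hvB⟩
        rw [hdisj] at this
        exact this
      · intro hv
        have : v ∈ A ∪ B := hcover ▸ mem_univ v
        exact this.resolve_right hv
    rw [this]
    exact hBclosed.isOpen_compl
  have hclopen : IsClopen A := ⟨hAclosed, hAopen⟩
  rcases isClopen_iff.mp hclopen with h | h
  · rw [h] at hwA; exact hwA
  · have : z ∈ A := h ▸ mem_univ z
    exact hxz this.1
end

section
/- Let R be a relation on a set X. If R is complete and semi-transitive, then its symmetric part I is transitive. -/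
open Set

/-- if `R` is complete and semi-transitive, then its symmetric part is transitive. -/
theorem symmPart_transitive_of_complete_semiTrans {X : Type} (R : Set (X × X))
    (hcomp : IsCompleteRel R) (hst : IsSemiTransRel R) :
    IsTransRel (symmPart R) := by
  rintro ⟨x, y⟩ ⟨z, hxz, hzy⟩
  obtain ⟨hxz1, hxz2⟩ := hxz
  obtain ⟨hzy1, hzy2⟩ := hzy
  have hcases : (x, y) ∈ R ∨ (y, x) ∈ R := by
    have : (x, y) ∈ R ∪ transp R := by rw [hcomp]; trivial
    rcases this with h | h
    · exact Or.inl h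
    · exact Or.inr h
  by_cases hxy : (x, y) ∈ R
  · by_cases hyx : (y, x) ∈ R
    · exact ⟨hxy, hyx⟩
    · -- (x,y) ∈ P, so (z,y) ∈ relComp P I ⊆ P, contradicting (z,y) ∈ I
      have hP : (x, y) ∈ asymmPart R := ⟨hxy, hyx⟩
      have : (z, y) ∈ asymmPart R :=
        hst.2 ⟨x, ⟨hxz2, hxz1⟩, hP⟩
      exact absurd hzy2 this.2
  · have hyx : (y, x) ∈ R := hcases.resolve_left hxy
    have hP : (y, x) ∈ asymmPart R := ⟨hyx, hxy⟩
    have : (y, z) ∈ asymmPart R :=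
      hst.1 ⟨x, hP, ⟨hxz1, hxz2⟩⟩
    exact absurd hzy1 this.2
end

section
/- Let R be a relation on a set X. Then R is transitive if and only if R is semi-transitive and both its asymmetric part P and its symmetric part I are transitive. -/
open Set

/-- `R` is transitive iff `R` is semi-transitive and both its asymmetric part
and its symmetric part are transitive. -/
theorem transitive_iff_semiTrans_and_parts_transitive {X : Type} (R : Set (X × X)) :
    IsTransRel R ↔
      IsSemiTransRel R ∧ IsTransRel (asymmPart R) ∧ IsTransRel (symmPart R) := by
  constructor
  · intro hT
    refine ⟨⟨?_, ?_⟩, ?_, ?_⟩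
    · rintro ⟨x, y⟩ ⟨z, ⟨hxz, hnzx⟩, hzy, hyz⟩
      exact ⟨hT ⟨z, hxz, hzy⟩, fun hyx => hnzx (hT ⟨y, hzy, hyx⟩)⟩
    · rintro ⟨x, y⟩ ⟨z, ⟨hxz, hzx⟩, hzy, hnyz⟩
      exact ⟨hT ⟨z, hxz, hzy⟩, fun hyx => hnyz (hT ⟨x, hyx, hxz⟩)⟩
    · rintro ⟨x, y⟩ ⟨z, ⟨hxz, hnzx⟩, hzy, hnyz⟩
      exact ⟨hT ⟨z, hxz, hzy⟩, fun hyx => hnyz (hT ⟨x, hyx, hxz⟩)⟩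
    · rintro ⟨x, y⟩ ⟨z, ⟨hxz, hzx⟩, hzy, hyz⟩
      exact ⟨hT ⟨z, hxz, hzy⟩, hT ⟨z, hyz, hzx⟩⟩
  · rintro ⟨⟨hIP, hPI⟩, hP, hI⟩ ⟨x, y⟩ ⟨z, hxz, hzy⟩
    by_cases hzx : (z, x) ∈ R <;> by_cases hyz : (y, z) ∈ R
    · exact (hI ⟨z, ⟨hxz, hzx⟩, hzy, hyz⟩).1
    · exact (hPI ⟨z, ⟨hxz, hzx⟩, hzy, hyz⟩).1
    · exact (hIP ⟨z, ⟨hxz, hzx⟩, hzy, hyz⟩).1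
    · exact (hP ⟨z, ⟨hxz, hzx⟩, hzy, hyz⟩).1
end

section
/- Let (R_H, R_S) be a non-trivial, semi-transitive and connected bi-relation on a set X. If (y,x) ∈ P_S then P_S(y) ∪ P_S⁻¹(x) = X. Equivalently, P_S is negatively transitive. -/
open Set

/-- for a non-trivial, semi-transitive, connected bi-relation, if `(y,x) ∈ P_S`
then `P_S(y) ∪ P_S⁻¹(x) = X`; equivalently, `P_S` is negatively transitive. -/
theorem claim_one_negatively_transitive {X : Type}
    (RH RS : Set (X × X)) (hbi : IsBiRelation RH RS)
    (hnt : IsNontrivialRel RS) (hst : IsSemiTransBiRel RH RS)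
    (hconn : ConnectedBiRel RH RS) :
    (∀ x y : X, (y, x) ∈ asymmPart RS →
      upSec (asymmPart RS) y ∪ lowSec (asymmPart RS) x = Set.univ) ∧
    IsTransRel (asymmPart RS)ᶜ := by
  obtain ⟨hHS, hPSH⟩ := hbi
  obtain ⟨⟨hH1, hH2⟩, h2, h3, h4, h5⟩ := hst
  have main : ∀ x y : X, (y, x) ∈ asymmPart RS →
      upSec (asymmPart RS) y ∪ lowSec (asymmPart RS) x = Set.univ := by
    intro x y hyx
    have hyxH : (y, x) ∈ asymmPart RH := hPSH hyx
    have hyxRH : (y, x) ∈ RH := hyxH.1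
    have hSC : upSec (asymmPart RS) y ∪ lowSec (asymmPart RS) x
        = upSec RH y ∪ lowSec RH x := by
      apply Set.Subset.antisymm
      · rintro w (hw | hw)
        · exact Or.inl (hPSH hw).1
        · exact Or.inr (hPSH hw).1
      · rintro w (hw | hw)
        · -- case (b): (y,w) ∈ RH
          by_cases hnw : (y, w) ∈ asymmPart RS
          · exact Or.inl hnw
          · right
            have hyRSw : (y, w) ∈ RS := hHS hw
            have hwRSy : (w, y) ∈ RS := by
              by_contra hc
              exact hnw ⟨hyRSw, hc⟩
            have hwyI : (w, y) ∈ symmPart RS := ⟨hwRSy, hyRSw⟩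
            have hwRSx : (w, x) ∈ RS := h3 ⟨y, hwyI, hyxRH⟩
            by_cases hwy : (w, y) ∈ RH
            · have hwxH : (w, x) ∈ asymmPart RH :=
                hH2 ⟨y, ⟨hwy, hw⟩, hyxH⟩
              exact h4 ⟨hwxH, y, hwyI, hyx⟩
            · have hywP : (y, w) ∈ asymmPart RH := ⟨hw, hwy⟩
              refine ⟨hwRSx, fun hxw => ?_⟩
              exact hnw (h5 ⟨hywP, x, hyx, ⟨hxw, hwRSx⟩⟩)
        · -- case (a): (w,x) ∈ RH
          by_cases hnw : (w, x) ∈ asymmPart RS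
          · exact Or.inr hnw
          · left
            have hwRSx : (w, x) ∈ RS := hHS hw
            have hxRSw : (x, w) ∈ RS := by
              by_contra hc
              exact hnw ⟨hwRSx, hc⟩
            have hxwI : (x, w) ∈ symmPart RS := ⟨hxRSw, hwRSx⟩
            have hyRSw : (y, w) ∈ RS := h2 ⟨x, hyxRH, hxwI⟩
            by_cases hxw : (x, w) ∈ RH
            · have hywH : (y, w) ∈ asymmPart RH :=
                hH1 ⟨x, hyxH, ⟨hxw, hw⟩⟩
              exact h5 ⟨hywH, x, hyx, hxwI⟩
            · have hwxP : (w, x) ∈ asymmPart RH := ⟨hw, hxw⟩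
              refine ⟨hyRSw, fun hwy => ?_⟩
              exact hnw (h4 ⟨hwxP, y, ⟨hwy, hyRSw⟩, hyx⟩)
    ext z
    simp only [Set.mem_univ, iff_true]
    obtain ⟨Λ, τ, hconnSp, f, ⟨a, ha⟩, ⟨b, hb⟩, hsec⟩ := hconn x z
    haveI := hconnSp
    have hopen : IsOpen (f ⁻¹' (upSec (asymmPart RS) y ∪ lowSec (asymmPart RS) x)) := by
      rw [Set.preimage_union]
      exact ((hsec y).2.2.1).union ((hsec x).2.2.2)
    have hclosed : IsClosed (f ⁻¹' (upSec (asymmPart RS) y ∪ lowSec (asymmPart RS) x)) := by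
      rw [hSC, Set.preimage_union]
      exact ((hsec y).1).union ((hsec x).2.1)
    have hne : (f ⁻¹' (upSec (asymmPart RS) y ∪ lowSec (asymmPart RS) x)).Nonempty := by
      refine ⟨a, ?_⟩
      rw [Set.mem_preimage, ha]
      exact Or.inl hyx
    have huniv : f ⁻¹' (upSec (asymmPart RS) y ∪ lowSec (asymmPart RS) x) = Set.univ :=
      IsClopen.eq_univ ⟨hclosed, hopen⟩ hne
    have hbmem : b ∈ f ⁻¹' (upSec (asymmPart RS) y ∪ lowSec (asymmPart RS) x) := by
      rw [huniv]; trivial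
    rw [Set.mem_preimage, hb] at hbmem
    exact hbmem
  refine ⟨main, ?_⟩
  rintro ⟨u, v⟩ ⟨z, huz, hzv⟩ huv
  have hz : z ∈ upSec (asymmPart RS) u ∪ lowSec (asymmPart RS) v := by
    rw [main v u huv]
    trivial
  rcases hz with h | h
  · exact huz h
  · exact hzv h
end

section
/- Let (R_H, R_S) be a non-trivial, semi-transitive and connected bi-relation on a set X. Then R_S is complete: R_S ∪ R_S⁻¹ = X × X. -/
open Set

section ClaimTwoAux

variable {X : Type}

private lemma symmPart_swap {R : Set (X × X)} {p q : X}
    (h : (p, q) ∈ symmPart R) : (q, p) ∈ symmPart R := ⟨h.2, h.1⟩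

private lemma symm_of_not_asymm {R : Set (X × X)} {p q : X}
    (h : (p, q) ∈ R) (h2 : (p, q) ∉ asymmPart R) : (p, q) ∈ symmPart R :=
  ⟨h, Classical.byContradiction fun hn => h2 ⟨h, hn⟩⟩

/-- Key lemma: if `(u,v) ∈ P_S` then every `z` satisfies `u P_S z` or `z P_S v`. -/
private lemma lemma_one {RH RS : Set (X × X)} (hbi : IsBiRelation RH RS)
    (hst : IsSemiTransBiRel RH RS) (hconn : ConnectedBiRel RH RS)
    {u v : X} (huv : (u, v) ∈ asymmPart RS) (z : X) :
    (u, z) ∈ asymmPart RS ∨ (z, v) ∈ asymmPart RS := by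
  obtain ⟨Λ, tΛ, hcs, g, ⟨γu, hγu⟩, ⟨γz, hγz⟩, hsec⟩ := hconn u z
  letI := tΛ
  haveI := hcs
  have hPSH : asymmPart RS ⊆ RH := fun p hp => (hbi.2 hp).1
  have huvH : (u, v) ∈ asymmPart RH := hbi.2 huv
  set U : Set Λ := g ⁻¹' upSec (asymmPart RS) u with hU_def
  set V : Set Λ := g ⁻¹' lowSec (asymmPart RS) v with hV_def
  have hUopen : IsOpen U := (hsec u).2.2.1
  have hVopen : IsOpen V := (hsec v).2.2.2
  have hUsub : U ⊆ g ⁻¹' upSec RH u := fun γ hγ =>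
    hPSH (show (u, g γ) ∈ asymmPart RS from hγ)
  have hVsub : V ⊆ g ⁻¹' lowSec RH v := fun γ hγ =>
    hPSH (show (g γ, v) ∈ asymmPart RS from hγ)
  have hUcl : closure U ⊆ g ⁻¹' upSec RH u := closure_minimal hUsub (hsec u).1
  have hVcl : closure V ⊆ g ⁻¹' lowSec RH v := closure_minimal hVsub (hsec v).2.1
  have hWclosed : IsClosed (U ∪ V) := by
    apply isClosed_of_closure_subset
    intro γ hγ
    by_contra hW
    have hU' : (u, g γ) ∉ asymmPart RS := fun h => hW (Or.inl h)
    have hV' : (g γ, v) ∉ asymmPart RS := fun h => hW (Or.inr h)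
    rw [closure_union] at hγ
    rcases hγ with hclU | hclV
    · -- frontier of the strict upper region of `u`
      have hucH : (u, g γ) ∈ RH := hUcl hclU
      have hucS : (u, g γ) ∈ symmPart RS := symm_of_not_asymm (hbi.1 hucH) hU'
      have hcvS : (g γ, v) ∈ RS := hst.2.2.1 ⟨u, symmPart_swap hucS, huvH.1⟩
      have hcvSym : (g γ, v) ∈ symmPart RS := symm_of_not_asymm hcvS hV'
      by_cases hcu : (g γ, u) ∈ RH
      · have hcuIH : (g γ, u) ∈ symmPart RH := ⟨hcu, hucH⟩
        have hcvPH : (g γ, v) ∈ asymmPart RH := hst.1.2 ⟨u, hcuIH, huvH⟩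
        exact hV' (hst.2.2.2.1 ⟨hcvPH, ⟨u, symmPart_swap hucS, huv⟩⟩)
      · have hucPH : (u, g γ) ∈ asymmPart RH := ⟨hucH, hcu⟩
        exact hU' (hst.2.2.2.2 ⟨hucPH, ⟨v, huv, symmPart_swap hcvSym⟩⟩)
    · -- frontier of the strict lower region of `v`
      have hcvH : (g γ, v) ∈ RH := hVcl hclV
      have hcvSym : (g γ, v) ∈ symmPart RS := symm_of_not_asymm (hbi.1 hcvH) hV'
      have hucS : (u, g γ) ∈ RS := hst.2.1 ⟨v, huvH.1, symmPart_swap hcvSym⟩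
      have hucSym : (u, g γ) ∈ symmPart RS := symm_of_not_asymm hucS hU'
      by_cases hvc : (v, g γ) ∈ RH
      · have hvcIH : (v, g γ) ∈ symmPart RH := ⟨hvc, hcvH⟩
        have hucPH : (u, g γ) ∈ asymmPart RH := hst.1.1 ⟨v, huvH, hvcIH⟩
        exact hU' (hst.2.2.2.2 ⟨hucPH, ⟨v, huv, symmPart_swap hcvSym⟩⟩)
      · have hcvPH : (g γ, v) ∈ asymmPart RH := ⟨hcvH, hvc⟩
        exact hV' (hst.2.2.2.1 ⟨hcvPH, ⟨u, symmPart_swap hucSym, huv⟩⟩)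
  rcases isClopen_iff.mp ⟨hWclosed, hUopen.union hVopen⟩ with hemp | huniv
  · exfalso
    have hmem : γu ∈ U ∪ V :=
      Or.inr (show (g γu, v) ∈ asymmPart RS by rw [hγu]; exact huv)
    rw [hemp] at hmem
    exact hmem
  · have hmem : γz ∈ U ∪ V := huniv ▸ mem_univ γz
    rcases hmem with h | h
    · left
      have h' : (u, g γz) ∈ asymmPart RS := h
      rwa [hγz] at h'
    · right
      have h' : (g γz, v) ∈ asymmPart RS := h
      rwa [hγz] at h'

end ClaimTwoAux

/-- the soft part of a non-trivial, semi-transitive, connected bi-relation is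
complete. -/
theorem claim_two_soft_part_complete {X : Type}
    (RH RS : Set (X × X)) (hbi : IsBiRelation RH RS)
    (hnt : IsNontrivialRel RS) (hst : IsSemiTransBiRel RH RS)
    (hconn : ConnectedBiRel RH RS) :
    IsCompleteRel RS := by
  obtain ⟨⟨a, b⟩, hab⟩ : (asymmPart RS).Nonempty := Set.nonempty_iff_ne_empty.mpr hnt
  rw [IsCompleteRel, Set.eq_univ_iff_forall]
  rintro ⟨x, y⟩
  by_contra hxy
  have h1 : (x, y) ∉ RS := fun h => hxy (Or.inl h)
  have h2 : (y, x) ∉ RS := fun h => hxy (Or.inr h)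
  have hPSH : asymmPart RS ⊆ RH := fun p hp => (hbi.2 hp).1
  rcases lemma_one hbi hst hconn hab x with hax | hxb
  · -- `a P_S x`; work on a connected set joining `a` and `x`
    obtain ⟨Λ, tΛ, hcs, g, ⟨γa, hγa⟩, ⟨γx, hγx⟩, hsec⟩ := hconn a x
    letI := tΛ
    haveI := hcs
    set V : Set Λ := g ⁻¹' lowSec (asymmPart RS) x with hV_def
    have hVopen : IsOpen V := (hsec x).2.2.2
    have hVy : V ⊆ g ⁻¹' lowSec (asymmPart RS) y := by
      intro γ hγ
      have hγ' : (g γ, x) ∈ asymmPart RS := hγ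
      rcases lemma_one hbi hst hconn hγ' y with h | h
      · exact h
      · exact absurd h.1 h2
    have hclx : closure V ⊆ g ⁻¹' lowSec RH x :=
      closure_minimal (fun γ hγ => hPSH (show (g γ, x) ∈ asymmPart RS from hγ))
        (hsec x).2.1
    have hcly : closure V ⊆ g ⁻¹' lowSec RH y :=
      closure_minimal (fun γ hγ => hPSH (show (g γ, y) ∈ asymmPart RS from hVy hγ))
        (hsec y).2.1
    have hVclosed : IsClosed V := by
      apply isClosed_of_closure_subset
      intro γ hγ
      by_contra hnV
      have hnV' : (g γ, x) ∉ asymmPart RS := hnV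
      have hdx : (g γ, x) ∈ RH := hclx hγ
      have hdy : (g γ, y) ∈ RH := hcly hγ
      have hxd : (x, g γ) ∈ symmPart RS :=
        symmPart_swap (symm_of_not_asymm (hbi.1 hdx) hnV')
      exact h1 (hst.2.2.1 ⟨g γ, hxd, hdy⟩)
    rcases isClopen_iff.mp ⟨hVclosed, hVopen⟩ with hemp | huniv
    · have hmem : γa ∈ V := show (g γa, x) ∈ asymmPart RS by rw [hγa]; exact hax
      rw [hemp] at hmem
      exact hmem
    · have hmem : γx ∈ V := huniv ▸ mem_univ γx
      have h' : (g γx, x) ∈ asymmPart RS := hmem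
      rw [hγx] at h'
      exact h'.2 h'.1
  · -- `x P_S b`; first get `y P_S b`, then work on a connected set joining `x` and `b`
    have hyb : (y, b) ∈ asymmPart RS := by
      rcases lemma_one hbi hst hconn hxb y with h | h
      · exact absurd h.1 h1
      · exact h
    obtain ⟨Λ, tΛ, hcs, g, ⟨γx, hγx⟩, ⟨γb, hγb⟩, hsec⟩ := hconn x b
    letI := tΛ
    haveI := hcs
    set W : Set Λ := g ⁻¹' upSec (asymmPart RS) x with hW_def
    have hWopen : IsOpen W := (hsec x).2.2.1
    have hWy : W ⊆ g ⁻¹' upSec (asymmPart RS) y := by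
      intro γ hγ
      have hγ' : (x, g γ) ∈ asymmPart RS := hγ
      rcases lemma_one hbi hst hconn hγ' y with h | h
      · exact absurd h.1 h1
      · exact h
    have hclx : closure W ⊆ g ⁻¹' upSec RH x :=
      closure_minimal (fun γ hγ => hPSH (show (x, g γ) ∈ asymmPart RS from hγ))
        (hsec x).1
    have hcly : closure W ⊆ g ⁻¹' upSec RH y :=
      closure_minimal (fun γ hγ => hPSH (show (y, g γ) ∈ asymmPart RS from hWy hγ))
        (hsec y).1
    have hWclosed : IsClosed W := by
      apply isClosed_of_closure_subset
      intro γ hγ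
      by_contra hnW
      have hnW' : (x, g γ) ∉ asymmPart RS := hnW
      have hdx : (x, g γ) ∈ RH := hclx hγ
      have hdy : (y, g γ) ∈ RH := hcly hγ
      have hdxS : (g γ, x) ∈ symmPart RS :=
        symmPart_swap (symm_of_not_asymm (hbi.1 hdx) hnW')
      exact h2 (hst.2.1 ⟨g γ, hdy, hdxS⟩)
    rcases isClopen_iff.mp ⟨hWclosed, hWopen⟩ with hemp | huniv
    · have hmem : γb ∈ W := show (x, g γb) ∈ asymmPart RS by rw [hγb]; exact hxb
      rw [hemp] at hmem
      exact hmem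
    · have hmem : γx ∈ W := huniv ▸ mem_univ γx
      have h' : (x, g γx) ∈ asymmPart RS := hmem
      rw [hγx] at h'
      exact h'.2 h'.1
end

section
/- Let (R_H, R_S) be a semi-transitive bi-relation on a set X and let x,y ∈ X with (y,x) ∈ P_S. Then R_H(y) ∪ R_H⁻¹(x) = P_S(y) ∪ P_S⁻¹(x). -/
open Set

/-- for a semi-transitive bi-relation with `(y,x) ∈ P_S`,
`R_H(y) ∪ R_H⁻¹(x) = P_S(y) ∪ P_S⁻¹(x)`. -/
theorem sections_union_eq {X : Type} (RH RS : Set (X × X))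
    (hbi : IsBiRelation RH RS) (hst : IsSemiTransBiRel RH RS)
    (x y : X) (hyx : (y, x) ∈ asymmPart RS) :
    upSec RH y ∪ lowSec RH x = upSec (asymmPart RS) y ∪ lowSec (asymmPart RS) x := by
  obtain ⟨hHS, hPSH⟩ := hbi
  obtain ⟨⟨hIP, hPI⟩, hISH, hHIS, hPIS, hISP⟩ := hst
  have hyxH : (y, x) ∈ asymmPart RH := hPSH hyx
  have hyxRH : (y, x) ∈ RH := hyxH.1
  ext z
  simp only [mem_union, upSec, lowSec, mem_setOf_eq]
  constructor
  · rintro (hz | hz)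
    · -- (y,z) ∈ RH
      by_contra hcon
      push_neg at hcon
      obtain ⟨h1, h2⟩ := hcon
      have hyzS : (y, z) ∈ RS := hHS hz
      have hyzI : (y, z) ∈ symmPart RS := ⟨hyzS, by
        by_contra hne
        exact h1 ⟨hyzS, hne⟩⟩
      have hzxS : (z, x) ∈ RS := hHIS ⟨y, ⟨hyzI.2, hyzI.1⟩, hyxRH⟩
      have hzxI : (z, x) ∈ symmPart RS := ⟨hzxS, by
        by_contra hne
        exact h2 ⟨hzxS, hne⟩⟩
      by_cases hzy : (z, y) ∈ RH
      · -- (y,z) ∈ I_H, so (z,x) ∈ P_H by semi-transitivity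
        have hzxPH : (z, x) ∈ asymmPart RH := hPI ⟨y, ⟨hzy, hz⟩, hyxH⟩
        have : (z, x) ∈ asymmPart RS :=
          hPIS ⟨hzxPH, ⟨y, ⟨hyzI.2, hyzI.1⟩, hyx⟩⟩
        exact this.2 hzxI.2
      · -- (y,z) ∈ P_H
        have hyzPH : (y, z) ∈ asymmPart RH := ⟨hz, hzy⟩
        have : (y, z) ∈ asymmPart RS :=
          hISP ⟨hyzPH, ⟨x, hyx, ⟨hzxI.2, hzxI.1⟩⟩⟩
        exact this.2 hyzI.2
    · -- (z,x) ∈ RH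
      by_contra hcon
      push_neg at hcon
      obtain ⟨h1, h2⟩ := hcon
      have hzxS : (z, x) ∈ RS := hHS hz
      have hzxI : (z, x) ∈ symmPart RS := ⟨hzxS, by
        by_contra hne
        exact h2 ⟨hzxS, hne⟩⟩
      have hyzS : (y, z) ∈ RS := hISH ⟨x, hyxRH, ⟨hzxI.2, hzxI.1⟩⟩
      have hyzI : (y, z) ∈ symmPart RS := ⟨hyzS, by
        by_contra hne
        exact h1 ⟨hyzS, hne⟩⟩
      by_cases hxz : (x, z) ∈ RH
      · -- (z,x) ∈ I_H, so (y,z) ∈ P_H by semi-transitivity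
        have hyzPH : (y, z) ∈ asymmPart RH := hIP ⟨x, hyxH, ⟨hxz, hz⟩⟩
        have : (y, z) ∈ asymmPart RS :=
          hISP ⟨hyzPH, ⟨x, hyx, ⟨hzxI.2, hzxI.1⟩⟩⟩
        exact this.2 hyzI.2
      · -- (z,x) ∈ P_H
        have hzxPH : (z, x) ∈ asymmPart RH := ⟨hz, hxz⟩
        have : (z, x) ∈ asymmPart RS :=
          hPIS ⟨hzxPH, ⟨y, ⟨hyzI.2, hyzI.1⟩, hyx⟩⟩
        exact this.2 hzxI.2
  · rintro (hz | hz)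
    · exact Or.inl (hPSH hz).1
    · exact Or.inr (hPSH hz).1
end

section
/- Let (R_H, R_S) be a semi-transitive bi-relation on a set X and let u,v ∈ X with (u,v) ∉ R_S ∪ R_S⁻¹. Then I_H(u) ∩ R_H(v) = ∅ = R_H(u) ∩ I_H(v), and consequently R_H(u) ∩ R_H(v) = P_S(u) ∩ P_S(v). -/
open Set

/-- for a semi-transitive bi-relation and `(u,v) ∉ R_S ∪ R_S⁻¹`,
`I_H(u) ∩ R_H(v) = ∅ = R_H(u) ∩ I_H(v)`, and `R_H(u) ∩ R_H(v) = P_S(u) ∩ P_S(v)`. -/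
theorem sections_inter_eq {X : Type} (RH RS : Set (X × X))
    (hbi : IsBiRelation RH RS) (hst : IsSemiTransBiRel RH RS)
    (u v : X) (huv : (u, v) ∉ RS ∪ transp RS) :
    (upSec (symmPart RH) u ∩ upSec RH v = ∅ ∧
      upSec RH u ∩ upSec (symmPart RH) v = ∅) ∧
    upSec RH u ∩ upSec RH v = upSec (asymmPart RS) u ∩ upSec (asymmPart RS) v := by
  obtain ⟨hsub, hPS⟩ := hbi
  obtain ⟨_, hIS_RH, _, _, _⟩ := hst
  have huv1 : (u, v) ∉ RS := fun h => huv (Or.inl h)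
  have huv2 : (v, u) ∉ RS := fun h => huv (Or.inr h)
  refine ⟨⟨?_, ?_⟩, ?_⟩
  · ext z
    simp only [mem_inter_iff, mem_empty_iff_false, iff_false, not_and]
    rintro ⟨hu1, hu2⟩ hv
    have h1 : (v, z) ∈ RH := hv
    have h2 : (z, u) ∈ RH := hu2
    exact absurd (hIS_RH (show (v, u) ∈ _ from ⟨z, h1, hsub h2, hsub hu1⟩)) huv2
  · ext z
    simp only [mem_inter_iff, mem_empty_iff_false, iff_false, not_and]
    rintro hu ⟨hv1, hv2⟩
    have h1 : (u, z) ∈ RH := hu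
    have h2 : (z, v) ∈ RH := hv2
    exact absurd (hIS_RH (show (u, v) ∈ _ from ⟨z, h1, hsub h2, hsub hv1⟩)) huv1
  · ext z
    constructor
    · rintro ⟨hu, hv⟩
      have hu' : (u, z) ∈ RH := hu
      have hv' : (v, z) ∈ RH := hv
      have hzu : (z, u) ∉ RS := fun h =>
        huv2 (hIS_RH (show (v, u) ∈ _ from ⟨z, hv', h, hsub hu'⟩))
      have hzv : (z, v) ∉ RS := fun h =>
        huv1 (hIS_RH (show (u, v) ∈ _ from ⟨z, hu', h, hsub hv'⟩))
      exact ⟨⟨hsub hu', hzu⟩, ⟨hsub hv', hzv⟩⟩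
    · rintro ⟨hu, hv⟩
      exact ⟨(hPS hu).1, (hPS hv).1⟩
end

section
/- Let S be a set equipped with a mixture operation m : S × [0,1] × S → S, written xμy, satisfying x1y = x, xμy = y(1−μ)x, and (xμy)λy = x(λμ)y for all x,y ∈ S and λ,μ ∈ [0,1]. Every scalarly continuous relation R on S is a connected relation (the bi-relation (R,R) is connected, hence p-continuous): indeed for all x,y ∈ S, taking Λ = [0,1] with its standard topology and f(λ) = xλy witnesses the definition. -/
open Set

open unitInterval

/-- `m` is a mixture operation: `x1y = x`, `xμy = y(1-μ)x`, `(xμy)λy = x(λμ)y`. -/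
def IsMixtureOp {S : Type} (m : S → unitInterval → S → S) : Prop :=
  (∀ x y : S, m x 1 y = x) ∧
  (∀ x y : S, ∀ μ : unitInterval, m x μ y = m y (unitInterval.symm μ) x) ∧
  (∀ x y : S, ∀ lam μ : unitInterval, m (m x μ y) lam y = m x (lam * μ) y)

/-- `R` is mixture-continuous with respect to `m`. -/
def MixtureContinuousRel {S : Type} (m : S → unitInterval → S → S)
    (R : Set (S × S)) : Prop :=
  ∀ x y z : S,
    IsClosed {lam : unitInterval | m x lam y ∈ upSec R z} ∧
    IsClosed {lam : unitInterval | m x lam y ∈ lowSec R z}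

/-- `R` is Archimedean with respect to `m`. -/
def ArchimedeanRel {S : Type} (m : S → unitInterval → S → S)
    (R : Set (S × S)) : Prop :=
  ∀ x y z : S, (y, x) ∈ asymmPart R →
    ∃ lam δ : unitInterval, 0 < (lam : ℝ) ∧ (lam : ℝ) < 1 ∧ 0 < (δ : ℝ) ∧ (δ : ℝ) < 1 ∧
      m x lam z ∈ upSec (asymmPart R) y ∧ m y δ z ∈ lowSec (asymmPart R) x


lemma mix_zero {S : Type} {m : S → unitInterval → S → S} (hm : IsMixtureOp m) (x y : S) : m x 0 y = y := by
  rw [hm.2.1 x y 0, unitInterval.symm_zero, hm.1]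

lemma mix_self {S : Type} {m : S → unitInterval → S → S} (hm : IsMixtureOp m) (u : S) (lam : unitInterval) : m u lam u = u := by
  have h := hm.2.2 u u lam 0
  rw [mix_zero hm u u] at h
  rw [h, mul_zero, mix_zero hm]

lemma mix_nested {S : Type} {m : S → unitInterval → S → S} (hm : IsMixtureOp m) (u w : S) (lam μ : unitInterval) :
    m u lam (m u μ w) = m u (unitInterval.symm (unitInterval.symm lam * unitInterval.symm μ)) w := by
  rw [hm.2.1 u (m u μ w) lam, hm.2.1 u w μ, hm.2.2 w u (unitInterval.symm lam) (unitInterval.symm μ),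
    hm.2.1 w u (unitInterval.symm lam * unitInterval.symm μ)]

/-- convex combination inside the unit interval -/
def combo (lam a b : unitInterval) : unitInterval :=
  ⟨(lam : ℝ) * a + (1 - lam) * b, by
    constructor
    · nlinarith [lam.2.1, lam.2.2, a.2.1, a.2.2, b.2.1, b.2.2]
    · nlinarith [lam.2.1, lam.2.2, a.2.1, a.2.2, b.2.1, b.2.2]⟩

lemma coe_combo (lam a b : unitInterval) : (combo lam a b : ℝ) = lam * a + (1 - lam) * b := rfl

lemma mix_line_le {S : Type} {m : S → unitInterval → S → S} (hm : IsMixtureOp m) (x y : S) (a b lam : unitInterval) (hba : (b:ℝ) ≤ a) :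
    m (m x a y) lam (m x b y) = m x (combo lam a b) y := by
  rcases eq_or_lt_of_le a.2.1 with h0 | h0
  · -- a = 0, hence b = 0
    have ha : a = 0 := Subtype.ext h0.symm
    have hb : b = 0 := Subtype.ext (le_antisymm (by simpa [ha] using hba) b.2.1)
    subst ha; subst hb
    have hc : combo lam 0 0 = 0 := by
      apply Subtype.ext; simp [coe_combo]
    rw [hc, mix_zero hm, mix_self hm]
  · -- 0 < a
    set μ : unitInterval := ⟨(b:ℝ)/a, div_nonneg b.2.1 h0.le, (div_le_one h0).2 hba⟩ with hμ
    have hμa : μ * a = b := by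
      apply Subtype.ext
      show ((b:ℝ)/a) * a = b
      field_simp
    have hb' : m x b y = m (m x a y) μ y := by rw [hm.2.2 x y μ a, hμa]
    rw [hb', mix_nested hm, hm.2.2 x y _ a]
    congr 1
    apply Subtype.ext
    show (1 - (1-(lam:ℝ))*(1 - (b:ℝ)/a)) * a = (lam:ℝ)*a + (1-lam)*b
    field_simp
    ring

lemma mix_line {S : Type} {m : S → unitInterval → S → S} (hm : IsMixtureOp m) (x y : S) (a b lam : unitInterval) :
    m (m x a y) lam (m x b y) = m x (combo lam a b) y := by
  rcases le_total (b:ℝ) (a:ℝ) with h | h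
  · exact mix_line_le hm x y a b lam h
  · rw [hm.2.1 (m x a y) (m x b y) lam, mix_line_le hm x y b a (unitInterval.symm lam) h]
    congr 1
    apply Subtype.ext
    show (1-(lam:ℝ))*b + (1-(1-(lam:ℝ)))*a = (lam:ℝ)*a + (1-lam)*b
    ring


lemma open_diff_aux (A B : Set unitInterval) (hA : IsClosed A) (hB : IsClosed B)
    (key : ∀ a ν : unitInterval, a ∈ A \ B → ∃ t : unitInterval,
      t ∈ A ∧ ∃ lam : ℝ, 0 < lam ∧ lam < 1 ∧ (t : ℝ) = lam * a + (1 - lam) * ν) :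
    IsOpen (A \ B) := by
  rw [Metric.isOpen_iff]
  intro l0 hl0
  obtain ⟨ε, hε, hball⟩ := Metric.isOpen_iff.1 hB.isOpen_compl l0 hl0.2
  refine ⟨ε/2, by positivity, ?_⟩
  have hsub : Metric.ball l0 (ε/2) ⊆ A := by
    by_contra hcon
    rw [Set.not_subset] at hcon
    obtain ⟨μ, hμball, hμA⟩ := hcon
    have hdist : |(μ:ℝ) - l0| < ε/2 := by
      have := hμball
      rwa [Metric.mem_ball, Subtype.dist_eq, Real.dist_eq] at this
    -- μ ≠ l0 since l0 ∈ A
    rcases lt_trichotomy (μ:ℝ) (l0:ℝ) with hlt | heq | hgt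
    · -- approach from below: a := inf of A in [μ, l0]
      set T : Set ℝ := Subtype.val '' (A ∩ {t : unitInterval | (μ:ℝ) ≤ t ∧ (t:ℝ) ≤ l0}) with hT
      have hTc : IsCompact T := by
        apply IsCompact.image _ continuous_subtype_val
        apply IsClosed.isCompact
        exact hA.inter (IsClosed.preimage continuous_subtype_val isClosed_Icc :
          IsClosed {t : unitInterval | (t:ℝ) ∈ Icc (μ:ℝ) (l0:ℝ)})
      have hTne : T.Nonempty := ⟨l0, ⟨l0, ⟨hl0.1, hlt.le, le_refl _⟩, rfl⟩⟩
      have hmem := hTc.sInf_mem hTne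
      obtain ⟨a, ⟨haA, haμ, hal0⟩, haval⟩ := hmem
      have haB : a ∉ B := by
        intro hc
        apply hball _ hc
        rw [Metric.mem_ball, Subtype.dist_eq, Real.dist_eq, abs_sub_lt_iff]
        obtain ⟨h1, h2⟩ := abs_sub_lt_iff.1 hdist
        constructor <;> linarith
      obtain ⟨t, htA, lam, hl1, hl2, htval⟩ := key a μ ⟨haA, haB⟩
      have hμa : (μ:ℝ) < a := lt_of_le_of_ne haμ (fun h => hμA (by rwa [show μ = a from Subtype.ext h]))
      have hta : (t:ℝ) < a := by rw [htval]; nlinarith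
      have htμ : (μ:ℝ) < t := by rw [htval]; nlinarith
      have htT : (t:ℝ) ∈ T := ⟨t, ⟨htA, htμ.le, by linarith⟩, rfl⟩
      have := csInf_le hTc.bddBelow htT
      rw [← haval] at this
      linarith
    · exact hμA (by rw [show μ = l0 from Subtype.ext heq]; exact hl0.1)
    · -- approach from above: a := sup of A in [l0, μ]
      set T : Set ℝ := Subtype.val '' (A ∩ {t : unitInterval | (l0:ℝ) ≤ t ∧ (t:ℝ) ≤ μ}) with hT
      have hTc : IsCompact T := by
        apply IsCompact.image _ continuous_subtype_val
        apply IsClosed.isCompact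
        exact hA.inter (IsClosed.preimage continuous_subtype_val isClosed_Icc :
          IsClosed {t : unitInterval | (t:ℝ) ∈ Icc (l0:ℝ) (μ:ℝ)})
      have hTne : T.Nonempty := ⟨l0, ⟨l0, ⟨hl0.1, le_refl _, hgt.le⟩, rfl⟩⟩
      have hmem := hTc.sSup_mem hTne
      obtain ⟨a, ⟨haA, hal0, haμ⟩, haval⟩ := hmem
      have haB : a ∉ B := by
        intro hc
        apply hball _ hc
        rw [Metric.mem_ball, Subtype.dist_eq, Real.dist_eq, abs_sub_lt_iff]
        obtain ⟨h1, h2⟩ := abs_sub_lt_iff.1 hdist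
        constructor <;> linarith
      obtain ⟨t, htA, lam, hl1, hl2, htval⟩ := key a μ ⟨haA, haB⟩
      have hμa : (a:ℝ) < μ := lt_of_le_of_ne haμ (fun h => hμA (by rwa [show μ = a from Subtype.ext h.symm]))
      have hta : (a:ℝ) < t := by rw [htval]; nlinarith
      have htμ : (t:ℝ) < μ := by rw [htval]; nlinarith
      have htT : (t:ℝ) ∈ T := ⟨t, ⟨htA, by linarith, htμ.le⟩, rfl⟩
      have := le_csSup hTc.bddAbove htT
      rw [← haval] at this
      linarith
  intro p hp
  exact ⟨hsub hp, hball (Metric.ball_subset_ball (by linarith) hp) ⟩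


lemma line_witness {S : Type} (m : S → unitInterval → S → S) (hm : IsMixtureOp m)
    (R : Set (S × S)) (hmc : MixtureContinuousRel m R) (har : ArchimedeanRel m R)
    (x y : S) :
    x ∈ Set.range (fun lam : unitInterval => m x lam y) ∧
    y ∈ Set.range (fun lam : unitInterval => m x lam y) ∧
    ∀ z : S,
      IsClosed ((fun lam : unitInterval => m x lam y) ⁻¹' upSec R z) ∧
      IsClosed ((fun lam : unitInterval => m x lam y) ⁻¹' lowSec R z) ∧
      IsOpen ((fun lam : unitInterval => m x lam y) ⁻¹' upSec (asymmPart R) z) ∧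
      IsOpen ((fun lam : unitInterval => m x lam y) ⁻¹' lowSec (asymmPart R) z) := by
  set f : unitInterval → S := fun lam => m x lam y with hf
  refine ⟨⟨1, hm.1 x y⟩, ⟨0, mix_zero hm x y⟩, fun z => ?_⟩
  refine ⟨(hmc x y z).1, (hmc x y z).2, ?_, ?_⟩
  · have hset : f ⁻¹' upSec (asymmPart R) z = (f ⁻¹' upSec R z) \ (f ⁻¹' lowSec R z) := by
      ext lam
      simp only [Set.mem_preimage, Set.mem_diff, upSec, lowSec, asymmPart, transp,
        Set.mem_setOf_eq, Set.mem_diff]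
    rw [hset]
    apply open_diff_aux _ _ (hmc x y z).1 (hmc x y z).2
    intro a ν ha
    have hP : (z, f a) ∈ asymmPart R := ⟨ha.1, fun hc => ha.2 hc⟩
    obtain ⟨lam, δ, h1, h2, h3, h4, h5, h6⟩ := har (f a) z (f ν) hP
    refine ⟨combo lam a ν, ?_, lam, h1, h2, rfl⟩
    have hline := mix_line hm x y a ν lam
    rw [hline] at h5
    exact h5.1
  · have hset : f ⁻¹' lowSec (asymmPart R) z = (f ⁻¹' lowSec R z) \ (f ⁻¹' upSec R z) := by
      ext lam
      simp only [Set.mem_preimage, Set.mem_diff, upSec, lowSec, asymmPart, transp,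
        Set.mem_setOf_eq, Set.mem_diff]
    rw [hset]
    apply open_diff_aux _ _ (hmc x y z).2 (hmc x y z).1
    intro a ν ha
    have hP : (f a, z) ∈ asymmPart R := ⟨ha.1, fun hc => ha.2 hc⟩
    obtain ⟨lam, δ, h1, h2, h3, h4, h5, h6⟩ := har z (f a) (f ν) hP
    refine ⟨combo δ a ν, ?_, δ, h3, h4, rfl⟩
    have hline := mix_line hm x y a ν δ
    rw [hline] at h6
    exact h6.1

/-- every scalarly continuous relation on a mixture set is a connected
relation (hence p-continuous); indeed for all `x, y` the map `λ ↦ xλy` on `[0,1]`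
witnesses the definition. -/
theorem scalarly_continuous_implies_connected {S : Type}
    (m : S → unitInterval → S → S) (hm : IsMixtureOp m)
    (R : Set (S × S)) (hmc : MixtureContinuousRel m R) (har : ArchimedeanRel m R) :
    (ConnectedBiRel R R ∧ PContinuousBiRel R R) ∧
    (∀ x y : S,
      x ∈ Set.range (fun lam : unitInterval => m x lam y) ∧
      y ∈ Set.range (fun lam : unitInterval => m x lam y) ∧
      ∀ z : S,
        IsClosed ((fun lam : unitInterval => m x lam y) ⁻¹' upSec R z) ∧
        IsClosed ((fun lam : unitInterval => m x lam y) ⁻¹' lowSec R z) ∧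
        IsOpen ((fun lam : unitInterval => m x lam y) ⁻¹' upSec (asymmPart R) z) ∧
        IsOpen ((fun lam : unitInterval => m x lam y) ⁻¹' lowSec (asymmPart R) z)) := by
  have hw := line_witness m hm R hmc har
  refine ⟨⟨fun x y => ⟨unitInterval, inferInstance, inferInstance, _, hw x y⟩,
    fun x y => ⟨unitInterval, inferInstance, _, hw x y⟩⟩, hw⟩
end

section
/- Let X be a connected topological space and let (R_H, R_S) be a non-trivial, semi-transitive bi-relation on X such that all sections R_H(z), R_H⁻¹(z) are closed and all sections P_S(z), P_S⁻¹(z) are open. Then R_S is complete and transitive. -/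
open Set

/-- In a connected space, a nonempty proper open set has a boundary point. -/
lemma exists_boundary {X : Type} [TopologicalSpace X] [ConnectedSpace X]
    {S : Set X} (hS : IsOpen S) (hne : S.Nonempty) (hproper : S ≠ univ) :
    ∃ z, z ∈ closure S ∧ z ∉ S := by
  by_contra h
  push_neg at h
  have hcl : closure S = S := Subset.antisymm h subset_closure
  have hclosed : IsClosed S := closure_eq_iff_isClosed.mp hcl
  rcases isClopen_iff.mp ⟨hclosed, hS⟩ with h1 | h1
  · exact hne.ne_empty h1
  · exact hproper h1

/-- Key claim: if `(x,y) ∈ P_S` then every `z` satisfies `(x,z) ∈ P_S` or `(z,y) ∈ P_S`. -/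
lemma claimA {X : Type} [TopologicalSpace X] [ConnectedSpace X]
    (RH RS : Set (X × X)) (hbi : IsBiRelation RH RS) (hst : IsSemiTransBiRel RH RS)
    (hcl : ∀ z : X, IsClosed (upSec RH z) ∧ IsClosed (lowSec RH z))
    (hop : ∀ z : X, IsOpen (upSec (asymmPart RS) z) ∧ IsOpen (lowSec (asymmPart RS) z))
    {x y : X} (hxy : (x, y) ∈ asymmPart RS) :
    ∀ z : X, (x, z) ∈ asymmPart RS ∨ (z, y) ∈ asymmPart RS := by
  by_contra hcon
  push_neg at hcon
  obtain ⟨w0, hw1, hw2⟩ := hcon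
  have hPH : asymmPart RS ⊆ asymmPart RH := hbi.2
  have hPSRH : asymmPart RS ⊆ RH := fun p hp => (hPH hp).1
  have hRHRS : RH ⊆ RS := hbi.1
  have hSopen : IsOpen (upSec (asymmPart RS) x ∪ lowSec (asymmPart RS) y) :=
    (hop x).1.union ((hop y).2)
  have hSne : (upSec (asymmPart RS) x ∪ lowSec (asymmPart RS) y).Nonempty :=
    ⟨y, Or.inl hxy⟩
  have hSproper : upSec (asymmPart RS) x ∪ lowSec (asymmPart RS) y ≠ univ := by
    intro hq
    have hw : w0 ∈ upSec (asymmPart RS) x ∪ lowSec (asymmPart RS) y := hq ▸ mem_univ w0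
    rcases hw with h | h
    · exact hw1 h
    · exact hw2 h
  obtain ⟨z, hzc, hzS⟩ := exists_boundary hSopen hSne hSproper
  rw [closure_union] at hzc
  have hznU : (x, z) ∉ asymmPart RS := fun h => hzS (Or.inl h)
  have hznV : (z, y) ∉ asymmPart RS := fun h => hzS (Or.inr h)
  rcases hzc with hm | hm
  · -- z is a limit of points strictly below x
    have hsub : upSec (asymmPart RS) x ⊆ upSec RH x := fun t ht => hPSRH ht
    have hxzRH : (x, z) ∈ RH := closure_minimal hsub (hcl x).1 hm
    have hxzRS : (x, z) ∈ RS := hRHRS hxzRH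
    have hzxRS : (z, x) ∈ RS := by
      by_contra h; exact hznU ⟨hxzRS, h⟩
    have hIzx : (z, x) ∈ symmPart RS := ⟨hzxRS, hxzRS⟩
    have hzyRS : (z, y) ∈ RS := hst.2.2.1 ⟨x, hIzx, hPSRH hxy⟩
    have hyzRS : (y, z) ∈ RS := by
      by_contra h; exact hznV ⟨hzyRS, h⟩
    by_cases hzxRH : (z, x) ∈ RH
    · have hIHzx : (z, x) ∈ symmPart RH := ⟨hzxRH, hxzRH⟩
      have hPHzy : (z, y) ∈ asymmPart RH := hst.1.2 ⟨x, hIHzx, hPH hxy⟩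
      exact hznV (hst.2.2.2.1 ⟨hPHzy, ⟨x, hIzx, hxy⟩⟩)
    · have hPHxz : (x, z) ∈ asymmPart RH := ⟨hxzRH, hzxRH⟩
      exact hznU (hst.2.2.2.2 ⟨hPHxz, ⟨y, hxy, ⟨hyzRS, hzyRS⟩⟩⟩)
  · -- z is a limit of points strictly above y
    have hsub : lowSec (asymmPart RS) y ⊆ lowSec RH y := fun t ht => hPSRH ht
    have hzyRH : (z, y) ∈ RH := closure_minimal hsub (hcl y).2 hm
    have hzyRS : (z, y) ∈ RS := hRHRS hzyRH
    have hyzRS : (y, z) ∈ RS := by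
      by_contra h; exact hznV ⟨hzyRS, h⟩
    have hIyz : (y, z) ∈ symmPart RS := ⟨hyzRS, hzyRS⟩
    have hxzRS : (x, z) ∈ RS := hst.2.1 ⟨y, hPSRH hxy, hIyz⟩
    have hzxRS : (z, x) ∈ RS := by
      by_contra h; exact hznU ⟨hxzRS, h⟩
    by_cases hyzRH : (y, z) ∈ RH
    · have hIHyz : (y, z) ∈ symmPart RH := ⟨hyzRH, hzyRH⟩
      have hPHxz : (x, z) ∈ asymmPart RH := hst.1.1 ⟨y, hPH hxy, hIHyz⟩
      exact hznU (hst.2.2.2.2 ⟨hPHxz, ⟨y, hxy, hIyz⟩⟩)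
    · have hPHzy : (z, y) ∈ asymmPart RH := ⟨hzyRH, hyzRH⟩
      exact hznV (hst.2.2.2.1 ⟨hPHzy, ⟨x, ⟨hzxRS, hxzRS⟩, hxy⟩⟩)

/-- a non-trivial, semi-transitive bi-relation on a connected topological
space, with closed sections of `R_H` and open sections of `P_S`, has a complete and
transitive soft part. -/
theorem soft_part_complete_transitive_of_connected_space {X : Type}
    [TopologicalSpace X] [ConnectedSpace X]
    (RH RS : Set (X × X)) (hbi : IsBiRelation RH RS)
    (hnt : IsNontrivialRel RS) (hst : IsSemiTransBiRel RH RS)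
    (hcl : ∀ z : X, IsClosed (upSec RH z) ∧ IsClosed (lowSec RH z))
    (hop : ∀ z : X, IsOpen (upSec (asymmPart RS) z) ∧ IsOpen (lowSec (asymmPart RS) z)) :
    IsCompleteRel RS ∧ IsTransRel RS := by
  obtain ⟨⟨xb, yb⟩, hP⟩ : (asymmPart RS).Nonempty := nonempty_iff_ne_empty.mpr hnt
  have cA := fun {x y : X} (h : (x, y) ∈ asymmPart RS) => claimA RH RS hbi hst hcl hop h
  have hPSRH : asymmPart RS ⊆ RH := fun p hp => (hbi.2 hp).1
  have hRHRS : RH ⊆ RS := hbi.1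
  -- Completeness
  have hcomp : ∀ u v : X, (u, v) ∈ RS ∨ (v, u) ∈ RS := by
    intro u v
    by_contra hcon
    push_neg at hcon
    obtain ⟨h1, h2⟩ := hcon
    have hirr : ∀ t : X, (t, t) ∉ asymmPart RS := fun t ht => ht.2 ht.1
    have huS : u ∉ upSec (asymmPart RS) u ∪ lowSec (asymmPart RS) u := by
      rintro (h | h)
      · exact hirr u h
      · exact hirr u h
    have hSne : (upSec (asymmPart RS) u ∪ lowSec (asymmPart RS) u).Nonempty := by
      rcases cA hP u with h | h
      · exact ⟨xb, Or.inr h⟩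
      · exact ⟨yb, Or.inl h⟩
    have hSopen : IsOpen (upSec (asymmPart RS) u ∪ lowSec (asymmPart RS) u) :=
      (hop u).1.union (hop u).2
    have hSproper : upSec (asymmPart RS) u ∪ lowSec (asymmPart RS) u ≠ univ :=
      fun hq => huS (hq ▸ mem_univ u)
    obtain ⟨m, hmc, hmS⟩ := exists_boundary hSopen hSne hSproper
    have hmusP : (u, m) ∉ asymmPart RS := fun h => hmS (Or.inl h)
    have hmu'P : (m, u) ∉ asymmPart RS := fun h => hmS (Or.inr h)
    rw [closure_union] at hmc
    rcases hmc with hm | hm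
    · have hsubu : upSec (asymmPart RS) u ⊆ upSec RH u := fun t ht => hPSRH ht
      have hsubv : upSec (asymmPart RS) u ⊆ upSec RH v := by
        intro t ht
        rcases cA ht v with h | h
        · exact absurd h.1 h1
        · exact hPSRH h
      have humRH : (u, m) ∈ RH := closure_minimal hsubu (hcl u).1 hm
      have hvmRH : (v, m) ∈ RH := closure_minimal hsubv (hcl v).1 hm
      have humRS : (u, m) ∈ RS := hRHRS humRH
      have hmuRS : (m, u) ∈ RS := by
        by_contra h; exact hmusP ⟨humRS, h⟩
      exact h2 (hst.2.1 ⟨m, hvmRH, ⟨hmuRS, humRS⟩⟩)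
    · have hsubu : lowSec (asymmPart RS) u ⊆ lowSec RH u := fun t ht => hPSRH ht
      have hsubv : lowSec (asymmPart RS) u ⊆ lowSec RH v := by
        intro t ht
        rcases cA ht v with h | h
        · exact hPSRH h
        · exact absurd h.1 h2
      have hmuRH : (m, u) ∈ RH := closure_minimal hsubu (hcl u).2 hm
      have hmvRH : (m, v) ∈ RH := closure_minimal hsubv (hcl v).2 hm
      have hmuRS : (m, u) ∈ RS := hRHRS hmuRH
      have humRS : (u, m) ∈ RS := by
        by_contra h; exact hmu'P ⟨hmuRS, h⟩
      exact h1 (hst.2.2.1 ⟨m, ⟨humRS, hmuRS⟩, hmvRH⟩)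
  constructor
  · -- completeness
    apply eq_univ_iff_forall.mpr
    rintro ⟨u, v⟩
    rcases hcomp u v with h | h
    · exact Or.inl h
    · exact Or.inr h
  · -- transitivity
    rintro ⟨a, c⟩ ⟨b, hab, hbc⟩
    have da : (a, b) ∈ asymmPart RS ∨ (a, b) ∈ symmPart RS := by
      by_cases h : (b, a) ∈ RS
      · exact Or.inr ⟨hab, h⟩
      · exact Or.inl ⟨hab, h⟩
    have db : (b, c) ∈ asymmPart RS ∨ (b, c) ∈ symmPart RS := by
      by_cases h : (c, b) ∈ RS
      · exact Or.inr ⟨hbc, h⟩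
      · exact Or.inl ⟨hbc, h⟩
    rcases da with hPab | hIab <;> rcases db with hPbc | hIbc
    · rcases cA hPbc a with h | h
      · exact absurd h.1 hPab.2
      · exact h.1
    · exact hst.2.1 ⟨b, hPSRH hPab, hIbc⟩
    · exact hst.2.2.1 ⟨b, hIab, hPSRH hPbc⟩
    · rcases hcomp a c with h | h
      · exact h
      · by_cases hac : (a, c) ∈ RS
        · exact hac
        · exfalso
          rcases cA ⟨h, hac⟩ b with hh | hh
          · exact hh.2 hIbc.1
          · exact hh.2 hIab.1
end

section
/- Let X be a connected topological space and let R be an anti-symmetric, complete, continuous relation on X. Then for every y ∈ X, the upper section R(y) is a connected subset of X containing y. -/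
open Set

/-- for an anti-symmetric, complete, continuous relation on a connected
space, each upper section `R(y)` is a connected subset containing `y`. -/
theorem upper_section_connected {X : Type} [TopologicalSpace X] [ConnectedSpace X]
    (R : Set (X × X)) (hanti : symmPart R ⊆ {p : X × X | p.1 = p.2})
    (hcomp : IsCompleteRel R) (hcont : ContinuousRel R) :
    ∀ y : X, y ∈ upSec R y ∧ IsConnected (upSec R y) := by
  intro y
  have hyy : (y, y) ∈ R := by
    have h : ((y, y) : X × X) ∈ R ∪ transp R := by rw [hcomp]; trivial
    rcases h with h | h
    · exact h
    · exact h
  have hclosed : IsClosed (upSec R y) := (hcont y).1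
  have key : ∀ u v : Set X, IsClosed u → IsClosed v → upSec R y ⊆ u ∪ v →
      u ∩ v = ∅ → y ∈ u → upSec R y ⊆ u := by
    intro u v hu hv hcov hdisj hyu
    set K := (upSec R y ∩ u) ∪ lowSec R y with hKdef
    have hKc : Kᶜ = upSec R y ∩ v := by
      ext z
      simp only [hKdef, Set.mem_compl_iff, Set.mem_union, Set.mem_inter_iff, not_or, not_and]
      constructor
      · rintro ⟨h1, h2⟩
        have hzs : z ∈ upSec R y := by
          by_contra hzs
          have hzy : (z, y) ∈ R := by
            have h : ((y, z) : X × X) ∈ R ∪ transp R := by rw [hcomp]; trivial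
            rcases h with h | h
            · exact absurd h hzs
            · exact h
          exact h2 hzy
        exact ⟨hzs, (hcov hzs).resolve_left (h1 hzs)⟩
      · rintro ⟨hzs, hzv⟩
        have hzu : z ∉ u := by
          intro hzu
          have : z ∈ u ∩ v := ⟨hzu, hzv⟩
          rw [hdisj] at this
          exact this
        refine ⟨fun _ => hzu, fun hzl => ?_⟩
        have hzy : z = y := hanti ⟨hzl, hzs⟩
        exact hzu (hzy ▸ hyu)
    have hKclosed : IsClosed K := (hclosed.inter hu).union (hcont y).2.1
    have hKopen : IsOpen K := by
      rw [← isClosed_compl_iff, hKc]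
      exact hclosed.inter hv
    have hKuniv : K = Set.univ := by
      have hne : K.Nonempty := ⟨y, Or.inl ⟨hyy, hyu⟩⟩
      exact IsClopen.eq_univ ⟨hKclosed, hKopen⟩ hne
    intro z hz
    rcases hcov hz with h | h
    · exact h
    · exfalso
      have : z ∈ Kᶜ := by rw [hKc]; exact ⟨hz, h⟩
      rw [hKuniv] at this
      exact this (Set.mem_univ z)
  refine ⟨hyy, ⟨y, hyy⟩, ?_⟩
  rw [isPreconnected_iff_subset_of_fully_disjoint_closed hclosed]
  intro u v hu hv hcov hdisj
  rcases hcov hyy with hyu | hyv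
  · exact Or.inl (key u v hu hv hcov hdisj.inter_eq hyu)
  · refine Or.inr (key v u hv hu ?_ ?_ hyv)
    · rwa [Set.union_comm]
    · exact hdisj.symm.inter_eq
end

section
/- Let X = [0,1]² ⊆ ℝ² and define f : X → ℝ by f(x₁,x₂) = 2x₁x₂/(x₁² + x₂²) for (x₁,x₂) ≠ (0,0) and f(0,0) = 1. Let R = {(x,y) ∈ X × X : f(x) ≤ f(y)}. Then R is complete and transitive, but R is not mixture-continuous: there exist x,y,z ∈ X such that the set {λ ∈ [0,1] : λ·x + (1−λ)·y ∈ R⁻¹(z)} is not closed in [0,1] (in particular one may take x = (0,0), y = (1,0), z = (1,0)). -/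
open Set

/-- The Gale–Pomatto style function of Example 1. -/
noncomputable def gpF (p : ℝ × ℝ) : ℝ :=
  if p = (0, 0) then 1 else 2 * p.1 * p.2 / (p.1 ^ 2 + p.2 ^ 2)

/-- The unit square. -/
def unitSquare : Set (ℝ × ℝ) := Set.Icc (0 : ℝ) 1 ×ˢ Set.Icc (0 : ℝ) 1

/-- The relation induced on the unit square by `gpF`. -/
def gpRel : Set ((ℝ × ℝ) × (ℝ × ℝ)) :=
  {p | p.1 ∈ unitSquare ∧ p.2 ∈ unitSquare ∧ gpF p.1 ≤ gpF p.2}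

/-!
`gpRel` is the preorder pulled back from `ℝ` along `gpF`, hence complete and transitive.
On the segment from `(1,0)` to `(0,0)`, `gpF` vanishes everywhere except at the endpoint
`(0,0)`, where it is `1`. So the parameters whose point is weakly worse than `(1,0)` form
`[0,1] \ {1}`, which is not closed because `[0,1]` is connected.
-/

def preorderRel {α : Type} (S : Set α) (f : α → ℝ) : Set (α × α) :=
  {p | p.1 ∈ S ∧ p.2 ∈ S ∧ f p.1 ≤ f p.2}

theorem preorderRel_union_transp {α : Type} (S : Set α) (f : α → ℝ) :
    preorderRel S f ∪ transp (preorderRel S f) = S ×ˢ S := by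
  ext ⟨x, y⟩
  constructor
  · rintro (⟨hx, hy, -⟩ | ⟨hy, hx, -⟩) <;> exact ⟨hx, hy⟩
  · rintro ⟨hx, hy⟩
    rcases le_total (f x) (f y) with h | h
    · exact Or.inl ⟨hx, hy, h⟩
    · exact Or.inr ⟨hy, hx, h⟩

theorem preorderRel_trans {α : Type} (S : Set α) (f : α → ℝ) {x y z : α}
    (hxy : (x, y) ∈ preorderRel S f) (hyz : (y, z) ∈ preorderRel S f) :
    (x, z) ∈ preorderRel S f :=
  ⟨hxy.1, hyz.2.1, hxy.2.2.trans hyz.2.2⟩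

theorem not_isClosed_compl_singleton {X : Type*} [TopologicalSpace X] [PreconnectedSpace X]
    [T1Space X] [Nontrivial X] (x : X) : ¬ IsClosed ({x}ᶜ : Set X) := by
  intro h
  rcases isClopen_iff.mp ⟨h, isOpen_compl_singleton⟩ with h | h
  · obtain ⟨y, hy⟩ := exists_ne x
    exact h.subset (mem_compl_singleton_iff.mpr hy)
  · exact (h.symm.subset (mem_univ x)) rfl

theorem gpF_mk_zero (t : ℝ) : gpF (t, 0) = if t = 0 then 1 else 0 := by
  by_cases ht : t = 0 <;> simp [gpF, ht]

theorem segment_lowSec_gpRel_eq :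
    {lam : unitInterval |
        (lam : ℝ) • ((0 : ℝ), (0 : ℝ)) + (1 - (lam : ℝ)) • ((1 : ℝ), (0 : ℝ))
          ∈ lowSec gpRel ((1 : ℝ), (0 : ℝ))} = {1}ᶜ := by
  ext lam
  have hpt : (lam : ℝ) • ((0 : ℝ), (0 : ℝ)) + (1 - (lam : ℝ)) • ((1 : ℝ), (0 : ℝ))
      = (1 - (lam : ℝ), 0) := by
    ext <;> simp
  have hsq : (1 - (lam : ℝ), (0 : ℝ)) ∈ unitSquare :=
    ⟨(unitInterval.symm lam).2, unitInterval.zero_mem⟩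
  have hone : ((1 : ℝ), (0 : ℝ)) ∈ unitSquare :=
    ⟨unitInterval.one_mem, unitInterval.zero_mem⟩
  simp only [mem_ofPred_eq, hpt, lowSec, gpRel, hsq, hone, true_and, gpF_mk_zero]
  rw [mem_compl_singleton_iff, Ne, ← Subtype.coe_inj, Set.Icc.coe_one]
  grind

/-- the relation induced by `gpF` on the unit square is complete and
transitive, but not mixture-continuous: for some `x, y, z` in the square the set
`{λ ∈ [0,1] : λ•x + (1-λ)•y ∈ R⁻¹(z)}` is not closed in `[0,1]`
(in particular one may take `x = (0,0)`, `y = (1,0)`, `z = (1,0)`). -/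
theorem gpRel_complete_transitive_not_mixture_continuous :
    (gpRel ∪ transp gpRel = unitSquare ×ˢ unitSquare) ∧
    (∀ x y z : ℝ × ℝ, (x, y) ∈ gpRel → (y, z) ∈ gpRel → (x, z) ∈ gpRel) ∧
    (∃ x ∈ unitSquare, ∃ y ∈ unitSquare, ∃ z ∈ unitSquare,
      ¬ IsClosed {lam : unitInterval |
          (lam : ℝ) • x + (1 - (lam : ℝ)) • y ∈ lowSec gpRel z}) ∧
    ¬ IsClosed {lam : unitInterval |
        (lam : ℝ) • ((0 : ℝ), (0 : ℝ)) + (1 - (lam : ℝ)) • ((1 : ℝ), (0 : ℝ))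
          ∈ lowSec gpRel ((1 : ℝ), (0 : ℝ))} := by
  have hjump := segment_lowSec_gpRel_eq ▸ not_isClosed_compl_singleton (1 : unitInterval)
  have h00 : ((0 : ℝ), (0 : ℝ)) ∈ unitSquare :=
    ⟨unitInterval.zero_mem, unitInterval.zero_mem⟩
  have h10 : ((1 : ℝ), (0 : ℝ)) ∈ unitSquare :=
    ⟨unitInterval.one_mem, unitInterval.zero_mem⟩
  exact ⟨preorderRel_union_transp _ _, fun _ _ _ => preorderRel_trans _ _,
    ⟨_, h00, _, h10, _, h10, hjump⟩, hjump⟩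
end

section
/- Let X = [0,1]² ⊆ ℝ² and define f : X → ℝ by f(x₁,x₂) = 2x₁x₂/(x₁² + x₂²) for (x₁,x₂) ≠ (0,0) and f(0,0) = 1. Let R = {(x,y) ∈ X × X : f(x) ≤ f(y)}. Then R is p-continuous and, indeed, connected: for all x,y ∈ X there exist a connected topological space Λ and a function g : Λ → X with x and y in the image of g, such that for every z ∈ X the sets g⁻¹(R(z)) and g⁻¹(R⁻¹(z)) are closed and the sets g⁻¹(P(z)) and g⁻¹(P⁻¹(z)) are open, where P = R \ R⁻¹. -/
open Set

lemma gpF_diag (c : ℝ) : gpF (c, c) = 1 := by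
  unfold gpF
  split
  · rfl
  · rename_i h
    have hc : c ≠ 0 := by
      intro hc; exact h (by simp [hc])
    have h2 : c ^ 2 + c ^ 2 ≠ 0 := by positivity
    field_simp
    ring

lemma gpF_contAt {p : ℝ × ℝ} (hp : p ≠ (0, 0)) : ContinuousAt gpF p := by
  have hden : p.1 ^ 2 + p.2 ^ 2 ≠ 0 := by
    have : p.1 ≠ 0 ∨ p.2 ≠ 0 := by
      by_contra hc
      push_neg at hc
      exact hp (Prod.ext hc.1 hc.2)
    rcases this with h | h
    · positivity
    · positivity
  have hcont : ContinuousAt (fun q : ℝ × ℝ => 2 * q.1 * q.2 / (q.1 ^ 2 + q.2 ^ 2)) p :=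
    ContinuousAt.div (by fun_prop) (by fun_prop) hden
  apply hcont.congr
  filter_upwards [isOpen_compl_singleton.mem_nhds hp] with q hq
  simp only [mem_compl_iff, mem_singleton_iff] at hq
  simp only [gpF]; rw [if_neg hq]

lemma unitSquare_mem_iff {p : ℝ × ℝ} :
    p ∈ unitSquare ↔ (0 ≤ p.1 ∧ p.1 ≤ 1) ∧ 0 ≤ p.2 ∧ p.2 ≤ 1 := by
  simp only [unitSquare, Set.mem_prod, Set.mem_Icc]


/-- the relation induced by `gpF` on the unit square is p-continuous and
indeed connected: for all `x, y` in the square there are a connected topological space `Λ`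
and `g : Λ → X` with `x, y` in the image of `g`, such that for every `z` in the square
the preimages of the sections of `R` are closed and those of the sections of `P` are open. -/
theorem gpRel_connected :
    ∀ x ∈ unitSquare, ∀ y ∈ unitSquare,
      ∃ (Λ : Type) (_ : TopologicalSpace Λ), ConnectedSpace Λ ∧
        ∃ g : Λ → ℝ × ℝ,
          (∀ lam : Λ, g lam ∈ unitSquare) ∧
          x ∈ Set.range g ∧ y ∈ Set.range g ∧
          ∀ z ∈ unitSquare,
            IsClosed (g ⁻¹' upSec gpRel z) ∧ IsClosed (g ⁻¹' lowSec gpRel z) ∧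
            IsOpen (g ⁻¹' upSec (asymmPart gpRel) z) ∧
            IsOpen (g ⁻¹' lowSec (asymmPart gpRel) z) := by
  intro x hx y hy
  obtain ⟨⟨hx1, hx1'⟩, hx2, hx2'⟩ := unitSquare_mem_iff.mp hx
  obtain ⟨⟨hy1, hy1'⟩, hy2, hy2'⟩ := unitSquare_mem_iff.mp hy
  refine ⟨ℝ, inferInstance, inferInstance, ?_⟩
  set a : ℝ → ℝ := fun t => max 0 (min 1 (-t)) with ha
  set b : ℝ → ℝ := fun t => max 0 (min 1 t) with hb
  set g : ℝ → ℝ × ℝ := fun t =>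
    ((1 - a t - b t) + a t * x.1 + b t * y.1,
     (1 - a t - b t) + a t * x.2 + b t * y.2) with hg
  have ha0 : ∀ t, 0 ≤ a t := fun t => le_max_left _ _
  have hb0 : ∀ t, 0 ≤ b t := fun t => le_max_left _ _
  have ha1 : ∀ t, a t ≤ 1 := fun t => max_le zero_le_one (min_le_left _ _)
  have hb1 : ∀ t, b t ≤ 1 := fun t => max_le zero_le_one (min_le_left _ _)
  have haneg : ∀ t, 0 ≤ t → a t = 0 := by
    intro t ht
    simp only [ha]
    exact max_eq_left ((min_le_right _ _).trans (by linarith))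
  have hbneg : ∀ t, t ≤ 0 → b t = 0 := by
    intro t ht
    simp only [hb]
    exact max_eq_left ((min_le_right _ _).trans ht)
  have hmem : ∀ t, g t ∈ unitSquare := by
    intro t
    have h1 := ha0 t; have h2 := hb0 t; have h3 := ha1 t; have h4 := hb1 t
    have hab : a t + b t ≤ 1 := by
      rcases le_total t 0 with h | h
      · rw [hbneg t h]; linarith
      · rw [haneg t h]; linarith
    rw [unitSquare_mem_iff]
    refine ⟨⟨?_, ?_⟩, ?_, ?_⟩ <;> simp only [hg] <;>
      nlinarith [mul_nonneg h1 hx1, mul_nonneg h2 hy1,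
        mul_nonneg h1 hx2, mul_nonneg h2 hy2, mul_le_of_le_one_right h1 hx1',
        mul_le_of_le_one_right h2 hy1', mul_le_of_le_one_right h1 hx2',
        mul_le_of_le_one_right h2 hy2']
  have haone : ∀ t, t ≤ -1 → a t = 1 := by
    intro t ht
    simp only [ha]
    rw [min_eq_left (by linarith), max_eq_right zero_le_one]
  have hbone : ∀ t, 1 ≤ t → b t = 1 := by
    intro t ht
    simp only [hb]
    rw [min_eq_left ht, max_eq_right zero_le_one]
  have hgx : g (-1) = x := by
    have h1 : a (-1) = 1 := haone _ le_rfl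
    have h2 : b (-1) = 0 := hbneg _ (by norm_num)
    simp only [hg, h1, h2]
    ext <;> simp
  have hgy : g 1 = y := by
    have h1 : a 1 = 0 := haneg _ zero_le_one
    have h2 : b 1 = 1 := hbone _ le_rfl
    simp only [hg, h1, h2]
    ext <;> simp
  have hgc : Continuous g := by
    simp only [hg, ha, hb]
    fun_prop
  have hH : Continuous fun t => gpF (g t) := by
    rw [continuous_iff_continuousAt]
    intro t
    by_cases h0 : g t = (0, 0)
    · have hc1 : (1 - a t - b t) + a t * x.1 + b t * y.1 = 0 := congrArg Prod.fst h0
      have hc2 : (1 - a t - b t) + a t * x.2 + b t * y.2 = 0 := congrArg Prod.snd h0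
      have hge : 1 ≤ a t + b t := by
        nlinarith [mul_nonneg (ha0 t) hx1, mul_nonneg (hb0 t) hy1]
      rcases le_total t 0 with htle | htle
      · have hb0' : b t = 0 := hbneg t htle
        have ha1' : a t = 1 := le_antisymm (ha1 t) (by linarith)
        have hxx : x = (0, 0) := by
          have e1 : x.1 = 0 := by nlinarith
          have e2 : x.2 = 0 := by nlinarith
          exact Prod.ext e1 e2
        have htlt : t < 0 := by
          rcases lt_or_eq_of_le htle with h | h
          · exact h
          · subst h
            rw [ha] at ha1'
            norm_num at ha1'
        have heq : (fun _ : ℝ => (1 : ℝ)) =ᶠ[nhds t] fun s => gpF (g s) := by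
          filter_upwards [Iio_mem_nhds htlt] with s hs
          have hbs : b s = 0 := hbneg s (le_of_lt hs)
          have hgs : g s = (1 - a s, 1 - a s) := by
            simp only [hg, hbs, hxx]
            ext <;> simp
          rw [hgs, gpF_diag]
        exact ContinuousAt.congr continuousAt_const heq
      · have ha0' : a t = 0 := haneg t htle
        have hb1' : b t = 1 := le_antisymm (hb1 t) (by linarith)
        have hyy : y = (0, 0) := by
          have e1 : y.1 = 0 := by nlinarith
          have e2 : y.2 = 0 := by nlinarith
          exact Prod.ext e1 e2
        have htgt : 0 < t := by
          rcases lt_or_eq_of_le htle with h | h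
          · exact h
          · rw [← h] at hb1'
            rw [hb] at hb1'
            norm_num at hb1'
        have heq : (fun _ : ℝ => (1 : ℝ)) =ᶠ[nhds t] fun s => gpF (g s) := by
          filter_upwards [Ioi_mem_nhds htgt] with s hs
          have has : a s = 0 := haneg s (le_of_lt hs)
          have hgs : g s = (1 - b s, 1 - b s) := by
            simp only [hg, has, hyy]
            ext <;> simp
          rw [hgs, gpF_diag]
        exact ContinuousAt.congr continuousAt_const heq
    · exact (gpF_contAt h0).comp hgc.continuousAt
  refine ⟨g, hmem, ⟨-1, hgx⟩, ⟨1, hgy⟩, ?_⟩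
  intro z hz
  have e1 : g ⁻¹' upSec gpRel z = (fun t => gpF (g t)) ⁻¹' Ici (gpF z) := by
    ext t
    simp [upSec, gpRel, hz, hmem t]
  have e2 : g ⁻¹' lowSec gpRel z = (fun t => gpF (g t)) ⁻¹' Iic (gpF z) := by
    ext t
    simp [lowSec, gpRel, hz, hmem t]
  have e3 : g ⁻¹' upSec (asymmPart gpRel) z = (fun t => gpF (g t)) ⁻¹' Ioi (gpF z) := by
    ext t
    simp only [mem_preimage, upSec, asymmPart, transp, gpRel, mem_diff, mem_setOf_eq,
      mem_Ioi, hz, hmem t, true_and, not_and, not_le, forall_const]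
    exact and_iff_right_of_imp le_of_lt
  have e4 : g ⁻¹' lowSec (asymmPart gpRel) z = (fun t => gpF (g t)) ⁻¹' Iio (gpF z) := by
    ext t
    simp only [mem_preimage, lowSec, asymmPart, transp, gpRel, mem_diff, mem_setOf_eq,
      mem_Iio, hz, hmem t, true_and, not_and, not_le, forall_const]
    exact and_iff_right_of_imp le_of_lt
  rw [e1, e2, e3, e4]
  exact ⟨isClosed_Ici.preimage hH, isClosed_Iic.preimage hH,
    isOpen_Ioi.preimage hH, isOpen_Iio.preimage hH⟩
end
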